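/- arXiv:1811.09770 — 4 statements merged into one kernel-verified Lean document; each statement's English description precedes it below -/
import Mathlib

section
/- There exists β₀ > 0 such that the following holds whenever β ≥ β₀. Let μ_β be any subsequential weak limit of the finite-volume Ising lattice gauge measures. Then for any finite set P of plaquettes of ℤ⁴ there is a constant C_P depending only on P such that the μ_β-probability of the event that σ_p = −1 for all p ∈ P is at most C_P·e^{−2β·|P|}. -/
/-! Core definitions for Ising lattice gauge theory on ℤ⁴. -/

/-- A vertex of the lattice `ℤ⁴`. -/
abbrev V4 := Fin 4 → ℤ

/-- The unit vector in direction `i`. -/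
def unitVec (i : Fin 4) : V4 := fun m => if m = i then 1 else 0

/-- An (undirected, positively presented) nearest-neighbor edge of `ℤ⁴`:
the pair `(x, i)` stands for the edge from `x` to `x + eᵢ`. -/
abbrev Edge := V4 × Fin 4

/-- A plaquette `(x, i, j)`: the unit square with corner `x` spanned by directions `i, j`.
It is a genuine (positively oriented) plaquette when `i < j`. -/
abbrev Plaq := V4 × Fin 4 × Fin 4

/-- The two vertices of an edge. -/
def edgeVerts (e : Edge) : Finset V4 := {e.1, e.1 + unitVec e.2}

/-- The four edges of a plaquette. -/
def plaqEdges (p : Plaq) : Finset Edge :=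
  {(p.1, p.2.1), (p.1, p.2.2), (p.1 + unitVec p.2.1, p.2.2), (p.1 + unitVec p.2.2, p.2.1)}

/-- The four vertices of a plaquette. -/
def plaqVerts (p : Plaq) : Finset V4 :=
  {p.1, p.1 + unitVec p.2.1, p.1 + unitVec p.2.2, p.1 + unitVec p.2.1 + unitVec p.2.2}

/-- The plaquette variable `σ_p = σ_{e₁}σ_{e₂}σ_{e₃}σ_{e₄}` of a (±1-valued) spin
configuration `σ` on the edges of `ℤ⁴`. -/
def plaqSpin (σ : Edge → ℝ) (p : Plaq) : ℝ :=
  σ (p.1, p.2.1) * σ (p.1, p.2.2) * σ (p.1 + unitVec p.2.1, p.2.2) * σ (p.1 + unitVec p.2.2, p.2.1)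

/-- The vertex set of the cube `[a₁, a₁+w] × ⋯ × [a₄, a₄+w] ∩ ℤ⁴`. -/
noncomputable def cubeV (a : V4) (w : ℕ) : Finset V4 :=
  Fintype.piFinset fun m => Finset.Icc (a m) (a m + w)

/-- The set of nearest-neighbor edges of the cube with corner `a` and width `w`
(both endpoints in the cube). -/
noncomputable def cubeEdges (a : V4) (w : ℕ) : Finset Edge :=
  (cubeV a w ×ˢ (Finset.univ : Finset (Fin 4))).filter fun e => e.1 + unitVec e.2 ∈ cubeV a w

/-- The set of plaquettes of the cube with corner `a` and width `w`
(those with `i < j` all four of whose edges/vertices lie in the cube). -/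
noncomputable def cubePlaqs (a : V4) (w : ℕ) : Finset Plaq :=
  ((cubeV a w) ×ˢ ((Finset.univ : Finset (Fin 4)) ×ˢ (Finset.univ : Finset (Fin 4)))).filter
    fun p => p.2.1 < p.2.2 ∧ ∀ v ∈ plaqVerts p, v ∈ cubeV a w

/-- A spin configuration on the edges of the cube (`true` = spin `+1`, `false` = spin `-1`). -/
abbrev Config (a : V4) (w : ℕ) := {e : Edge // e ∈ cubeEdges a w} → Bool

/-- The ±1 spin value of a Boolean. -/
def boolSpin (b : Bool) : ℝ := if b then 1 else -1

/-- Extension of a configuration on a cube to all of `ℤ⁴`, putting spin `1` outside. -/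
noncomputable def extSpin (a : V4) (w : ℕ) (σ : Config a w) : Edge → ℝ :=
  fun e => if h : e ∈ cubeEdges a w then boolSpin (σ ⟨e, h⟩) else 1

/-- `∑_{p ∈ P(B)} σ_p`, i.e. minus the Hamiltonian of the configuration `σ` on the cube. -/
noncomputable def energy (a : V4) (w : ℕ) (σ : Config a w) : ℝ :=
  ∑ p ∈ cubePlaqs a w, plaqSpin (extSpin a w σ) p

/-- Expectation `⟨f⟩` in Ising lattice gauge theory on the cube with corner `a` and width `w`,
at inverse coupling strength `β`, with free boundary condition. -/
noncomputable def gibbsExp (a : V4) (w : ℕ) (β : ℝ) (f : (Edge → ℝ) → ℝ) : ℝ :=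
  (∑ σ : Config a w, f (extSpin a w σ) * Real.exp (β * energy a w σ)) /
    (∑ σ : Config a w, Real.exp (β * energy a w σ))

/-- Expectation `⟨f⟩_{N,β}` in Ising lattice gauge theory on `B_N = [-N,N]⁴ ∩ ℤ⁴`
at inverse coupling strength `β`, with free boundary condition. -/
noncomputable def gibbsExpN (N : ℕ) (β : ℝ) (f : (Edge → ℝ) → ℝ) : ℝ :=
  gibbsExp (fun _ => -(N : ℤ)) (2 * N) β f

/-- The Wilson loop observable `W_γ = ∏_{e ∈ γ} σ_e`. -/
def wilson (γ : Finset Edge) (σ : Edge → ℝ) : ℝ := ∏ e ∈ γ, σ e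

/-- `γ` is a generalized loop: a nonempty finite set of edges such that every vertex of `ℤ⁴`
belongs to an even number of edges of `γ` (equivalently, a finite union of pairwise
edge-disjoint self-avoiding loops). -/
def IsGenLoop (γ : Finset Edge) : Prop :=
  γ.Nonempty ∧ ∀ v : V4, Even (γ.filter (fun e => v ∈ edgeVerts e)).card

/-- `e` is a corner edge of `γ`: some other edge `e' ∈ γ` shares a common plaquette with `e`. -/
def IsCornerEdge (γ : Finset Edge) (e : Edge) : Prop :=
  e ∈ γ ∧ ∃ e' ∈ γ, e' ≠ e ∧ ∃ p : Plaq, p.2.1 < p.2.2 ∧ e ∈ plaqEdges p ∧ e' ∈ plaqEdges p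

/-- The number of corner edges of `γ`. -/
noncomputable def cornerCount (γ : Finset Edge) : ℕ :=
  {e ∈ (γ : Set Edge) | IsCornerEdge γ e}.ncard

open MeasureTheory

/-- Extension of a configuration on a cube to all of `ℤ⁴`, by spin `+1` (`true`) outside. -/
noncomputable def extBool (a : V4) (w : ℕ) (σ : Config a w) : Edge → Bool :=
  fun e => if h : e ∈ cubeEdges a w then σ ⟨e, h⟩ else true

/-- Ising lattice gauge theory on `B_N = [-N,N]⁴ ∩ ℤ⁴` at inverse coupling strength `β` with
free boundary condition, lifted to a probability measure on the space
`Σ = {-1,1}^{E(ℤ⁴)}` (encoded as `Edge → Bool`) of spin configurations on all of `ℤ⁴` by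
setting `σ_e = 1` outside `E_N`. -/
noncomputable def gibbsMeasureN (N : ℕ) (β : ℝ) : Measure (Edge → Bool) :=
  (∑ σ : Config (fun _ => -(N : ℤ)) (2 * N),
      ENNReal.ofReal (Real.exp (β * energy (fun _ => -(N : ℤ)) (2 * N) σ)))⁻¹ •
    ∑ σ : Config (fun _ => -(N : ℤ)) (2 * N),
      ENNReal.ofReal (Real.exp (β * energy (fun _ => -(N : ℤ)) (2 * N) σ)) •
        Measure.dirac (extBool (fun _ => -(N : ℤ)) (2 * N) σ)

/-- `μ` is a subsequential weak limit, as `N → ∞`, of the finite-volume Ising lattice gauge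
measures on `Σ = {-1,1}^{E(ℤ⁴)}` (with its product topology) at inverse coupling `β`. -/
def IsGibbsLimit (β : ℝ) (μ : Measure (Edge → Bool)) : Prop :=
  IsProbabilityMeasure μ ∧
    ∃ φ : ℕ → ℕ, StrictMono φ ∧
      ∀ f : (Edge → Bool) → ℝ, Continuous f →
        Filter.Tendsto (fun k => ∫ x, f x ∂gibbsMeasureN (φ k) β)
          Filter.atTop (nhds (∫ x, f x ∂μ))

/-- The plaquette variable `σ_p` of a configuration `x : Edge → Bool`. -/
noncomputable def plaqSpinB (x : Edge → Bool) (p : Plaq) : ℝ :=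
  plaqSpin (fun e => boolSpin (x e)) p

/-!
Spin configurations form an elementary abelian 2-group under pointwise multiplication, and every
plaquette variable `σ_p` is a character of it. A product of characters is a character, so its sum
over all configurations is `0` or positive; expanding `exp (β σ_p) = cosh β + σ_p sinh β` turns
this into the first GKS inequality. By GKS, the partition function is at least
`cosh β ^ |P| ≥ (e^β / 2) ^ |P|` times the one without the couplings of the plaquettes in `P`,
while on the event that all `σ_p`, `p ∈ P`, equal `-1` the Boltzmann weight is `e^{-β|P|}` times
the weight without those couplings. This bounds the probability of the event by
`2^|P| e^{-2β|P|}` in every box containing `P`, and the bound passes to weak limits because the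
event is clopen in the product topology.
-/

namespace GKS

open Real Finset

section Characters

variable {Ω ι : Type*} {op : Ω → Ω → Ω}

variable (op) in
def IsCharacter (m : Ω → ℝ) : Prop :=
  ∀ σ τ, m (op σ τ) = m σ * m τ

lemma IsCharacter.mul {m m' : Ω → ℝ} (hm : IsCharacter op m) (hm' : IsCharacter op m') :
    IsCharacter op (m * m') := fun σ τ => by
  simp only [Pi.mul_apply]
  rw [hm, hm']
  ring

/-- Translating by `op σ` multiplies the sum by `m σ`, so a nonzero sum forces `m ≡ 1`. -/
lemma IsCharacter.sum_nonneg [Fintype Ω] (hop : ∀ σ, Function.Involutive (op σ)) {m : Ω → ℝ}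
    (hm : IsCharacter op m) : 0 ≤ ∑ σ, m σ := by
  by_cases hS : ∑ σ, m σ = 0
  · exact hS.ge
  have hone : ∀ σ, m σ = 1 := fun σ => by
    refine (mul_eq_right₀ hS).mp ?_
    calc m σ * ∑ τ, m τ = ∑ τ, m (op σ τ) := by simp only [hm σ, mul_sum]
      _ = ∑ τ, m τ := (hop σ).bijective.sum_comp m
  simp [hone]

lemma exp_mul_eq_cosh_add_mul_sinh {x : ℝ} (hx : x = 1 ∨ x = -1) (β : ℝ) :
    exp (β * x) = cosh β + x * sinh β := by
  rcases hx with rfl | rfl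
  · rw [mul_one, one_mul, cosh_add_sinh]
  · rw [mul_neg_one, neg_one_mul, ← sub_eq_add_neg, cosh_sub_sinh]

variable (s : ι → Ω → ℝ)

lemma sum_mul_exp_sum_insert [Fintype Ω] (hs : ∀ i σ, s i σ = 1 ∨ s i σ = -1) (m : Ω → ℝ)
    (β : ℝ) {q : ι} {R : Finset ι} [DecidableEq ι] (hq : q ∉ R) :
    ∑ σ, m σ * exp (β * ∑ i ∈ insert q R, s i σ) =
      cosh β * ∑ σ, m σ * exp (β * ∑ i ∈ R, s i σ) +
        sinh β * ∑ σ, (m * s q) σ * exp (β * ∑ i ∈ R, s i σ) := by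
  rw [mul_sum, mul_sum, ← sum_add_distrib]
  refine sum_congr rfl fun σ _ => ?_
  rw [sum_insert hq, mul_add, exp_add, exp_mul_eq_cosh_add_mul_sinh (hs q σ), Pi.mul_apply]
  ring

variable [Fintype Ω] {s} {β : ℝ}

/-- The first Griffiths–Kelly–Sherman inequality. -/
theorem sum_mul_exp_sum_nonneg (hop : ∀ σ, Function.Involutive (op σ))
    (hchar : ∀ i, IsCharacter op (s i)) (hs : ∀ i σ, s i σ = 1 ∨ s i σ = -1) (hβ : 0 ≤ β)
    (R : Finset ι) {m : Ω → ℝ} (hm : IsCharacter op m) :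
    0 ≤ ∑ σ, m σ * exp (β * ∑ i ∈ R, s i σ) := by
  classical
  induction R using Finset.induction_on generalizing m with
  | empty => simpa using hm.sum_nonneg hop
  | insert q R hq ih =>
    rw [sum_mul_exp_sum_insert s hs m β hq]
    exact add_nonneg (mul_nonneg (cosh_pos β).le (ih hm))
      (mul_nonneg (sinh_nonneg_iff.2 hβ) (ih (hm.mul (hchar q))))

lemma cosh_pow_mul_sum_exp_sum_le [DecidableEq ι] (hop : ∀ σ, Function.Involutive (op σ))
    (hchar : ∀ i, IsCharacter op (s i)) (hs : ∀ i σ, s i σ = 1 ∨ s i σ = -1) (hβ : 0 ≤ β)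
    {P R : Finset ι} (hPR : Disjoint P R) :
    cosh β ^ P.card * ∑ σ, exp (β * ∑ i ∈ R, s i σ) ≤
      ∑ σ, exp (β * ∑ i ∈ P ∪ R, s i σ) := by
  induction P using Finset.induction_on with
  | empty => simp
  | insert q P hq ih =>
    rw [disjoint_insert_left] at hPR
    have hexpand := sum_mul_exp_sum_insert s hs 1 β (mt mem_union.1 (not_or.2 ⟨hq, hPR.1⟩))
    simp only [Pi.mul_apply, Pi.one_apply, one_mul] at hexpand
    rw [insert_union, hexpand, card_insert_of_notMem hq, pow_succ', mul_assoc]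
    exact le_add_of_le_of_nonneg (mul_le_mul_of_nonneg_left (ih hPR.2) (cosh_pos β).le)
      (mul_nonneg (sinh_nonneg_iff.2 hβ) (sum_mul_exp_sum_nonneg hop hchar hs hβ _ (hchar q)))

lemma one_le_two_mul_exp_neg_mul_cosh (β : ℝ) : 1 ≤ 2 * exp (-β) * cosh β :=
  calc 1 = exp (-β) * exp β := by rw [← exp_add, neg_add_cancel, exp_zero]
    _ ≤ exp (-β) * (exp β + exp (-β)) := by gcongr; exact le_add_of_nonneg_right (exp_pos _).le
    _ = 2 * exp (-β) * cosh β := by rw [cosh_eq]; ring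

theorem sum_exp_sum_filter_le [DecidableEq ι] (hop : ∀ σ, Function.Involutive (op σ))
    (hchar : ∀ i, IsCharacter op (s i)) (hs : ∀ i σ, s i σ = 1 ∨ s i σ = -1) (hβ : 0 ≤ β)
    {P R : Finset ι} (hPR : P ⊆ R) :
    ∑ σ with ∀ i ∈ P, s i σ = -1, exp (β * ∑ i ∈ R, s i σ) ≤
      2 ^ P.card * exp (-2 * β * P.card) * ∑ σ, exp (β * ∑ i ∈ R, s i σ) := by
  set Z' := ∑ σ, exp (β * ∑ i ∈ R \ P, s i σ)
  have hcosh := cosh_pow_mul_sum_exp_sum_le hop hchar hs hβ (disjoint_sdiff (s := P) (t := R))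
  rw [union_sdiff_of_subset hPR] at hcosh
  have hnum :
      ∑ σ with ∀ i ∈ P, s i σ = -1, exp (β * ∑ i ∈ R, s i σ) ≤ exp (-β * P.card) * Z' := by
    rw [mul_sum]
    refine (sum_le_sum fun σ hσ => le_of_eq ?_).trans
      (sum_le_sum_of_subset_of_nonneg (filter_subset _ _) fun _ _ _ => by positivity)
    rw [← sum_sdiff hPR, sum_congr rfl (mem_filter.1 hσ).2, ← exp_add]
    simp only [sum_const, nsmul_eq_mul, mul_neg_one]
    ring_nf
  calc _ ≤ exp (-β * P.card) * Z' := hnum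
    _ ≤ exp (-β * P.card) * ((2 * exp (-β) * cosh β) ^ P.card * Z') := by
      gcongr
      exact le_mul_of_one_le_left (by positivity)
        (one_le_pow₀ (one_le_two_mul_exp_neg_mul_cosh β))
    _ = 2 ^ P.card * exp (-2 * β * P.card) * (cosh β ^ P.card * Z') := by
      have hexp : exp (-2 * β * P.card) = exp (-β * P.card) * exp (-β) ^ P.card := by
        rw [← exp_nat_mul, ← exp_add]
        ring_nf
      rw [hexp]
      ring
    _ ≤ _ := by gcongr

end Characters

end GKS

section LatticeGauge

open Real Finset

lemma boolSpin_eq_one_or_eq_neg_one (b : Bool) : boolSpin b = 1 ∨ boolSpin b = -1 := by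
  cases b <;> simp [boolSpin]

lemma boolSpin_beq (b c : Bool) : boolSpin (b == c) = boolSpin b * boolSpin c := by
  cases b <;> cases c <;> simp [boolSpin]

lemma plaqSpinB_eq_one_or_eq_neg_one (x : Edge → Bool) (p : Plaq) :
    plaqSpinB x p = 1 ∨ plaqSpinB x p = -1 := by
  unfold plaqSpinB plaqSpin
  rcases boolSpin_eq_one_or_eq_neg_one (x (p.1, p.2.1)) with h1 | h1 <;>
  rcases boolSpin_eq_one_or_eq_neg_one (x (p.1, p.2.2)) with h2 | h2 <;>
  rcases boolSpin_eq_one_or_eq_neg_one (x (p.1 + unitVec p.2.1, p.2.2)) with h3 | h3 <;>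
  rcases boolSpin_eq_one_or_eq_neg_one (x (p.1 + unitVec p.2.2, p.2.1)) with h4 | h4 <;>
  norm_num [h1, h2, h3, h4]

lemma plaqSpinB_beq (x y : Edge → Bool) (p : Plaq) :
    plaqSpinB (fun e => x e == y e) p = plaqSpinB x p * plaqSpinB y p := by
  simp only [plaqSpinB, plaqSpin, boolSpin_beq]
  ring

lemma continuous_plaqSpinB (p : Plaq) : Continuous fun x : Edge → Bool => plaqSpinB x p := by
  have h (e : Edge) : Continuous fun x : Edge → Bool => boolSpin (x e) :=
    (continuous_of_discreteTopology (f := boolSpin)).comp (continuous_apply e)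
  exact (((h _).mul (h _)).mul (h _)).mul (h _)

lemma isClopen_setOf_forall_plaqSpinB_eq_neg_one (P : Finset Plaq) :
    IsClopen {x : Edge → Bool | ∀ p ∈ P, plaqSpinB x p = -1} := by
  simp only [Set.ofPred_forall]
  refine isClopen_biInter_finset fun p _ => ⟨isClosed_eq (continuous_plaqSpinB p)
    continuous_const, ?_⟩
  have hneg : {x | plaqSpinB x p = -1} = {x | plaqSpinB x p < 0} := by
    ext x
    rcases plaqSpinB_eq_one_or_eq_neg_one x p with h | h <;> norm_num [h]
  exact hneg ▸ isOpen_lt (continuous_plaqSpinB p) continuous_const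

variable {a : V4} {w : ℕ}

lemma extSpin_eq_boolSpin_extBool (σ : Config a w) :
    extSpin a w σ = fun e => boolSpin (extBool a w σ e) := by
  funext e
  unfold extSpin extBool
  split <;> simp [boolSpin]

lemma extBool_beq (σ τ : Config a w) :
    extBool a w (fun i => σ i == τ i) = fun e => extBool a w σ e == extBool a w τ e := by
  funext e
  unfold extBool
  split <;> rfl

lemma energy_eq_sum_plaqSpinB (σ : Config a w) :
    energy a w σ = ∑ p ∈ cubePlaqs a w, plaqSpinB (extBool a w σ) p := by
  simp only [energy, plaqSpinB, extSpin_eq_boolSpin_extBool]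

theorem sum_exp_energy_filter_le {β : ℝ} (hβ : 0 ≤ β) {P : Finset Plaq}
    (hP : P ⊆ cubePlaqs a w) :
    ∑ σ : Config a w with ∀ p ∈ P, plaqSpinB (extBool a w σ) p = -1, exp (β * energy a w σ) ≤
      2 ^ P.card * exp (-2 * β * P.card) * ∑ σ : Config a w, exp (β * energy a w σ) := by
  simp only [energy_eq_sum_plaqSpinB]
  -- on `Bool`-encoded spins, `==` is multiplication of the spins `±1`
  refine GKS.sum_exp_sum_filter_le (op := fun σ τ i => σ i == τ i) (fun σ τ => ?_)
    (fun p σ τ => ?_) (fun p σ => plaqSpinB_eq_one_or_eq_neg_one _ p) hβ hP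
  · funext i
    change (σ i == (σ i == τ i)) = τ i
    cases σ i <;> cases τ i <;> rfl
  · simp only [extBool_beq, plaqSpinB_beq]

end LatticeGauge

section Measures

open MeasureTheory Finset

lemma measureReal_smul_sum_dirac {κ X : Type*} [Fintype κ] [MeasurableSpace X] {w : κ → ℝ}
    (hw : ∀ i, 0 ≤ w i) (x : κ → X) {A : Set X} [DecidablePred (x · ∈ A)]
    (hA : MeasurableSet A) :
    ((∑ i, ENNReal.ofReal (w i))⁻¹ • ∑ i, ENNReal.ofReal (w i) • Measure.dirac (x i)).real A =
      (∑ i with x i ∈ A, w i) / ∑ i, w i := by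
  have hterm (i : κ) : ENNReal.ofReal (w i) * A.indicator 1 (x i) =
      ENNReal.ofReal (if x i ∈ A then w i else 0) := by
    by_cases hi : x i ∈ A <;> simp [hi]
  simp only [measureReal_def, Measure.smul_apply, Measure.finsetSum_apply,
    Measure.dirac_apply' _ hA, smul_eq_mul, hterm]
  rw [← ENNReal.ofReal_sum_of_nonneg fun i _ => hw i,
    ← ENNReal.ofReal_sum_of_nonneg fun i _ => by split_ifs <;> simp [hw i], ← sum_filter,
    ENNReal.toReal_mul, ENNReal.toReal_inv, ENNReal.toReal_ofReal (sum_nonneg fun i _ => hw i),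
    ENNReal.toReal_ofReal (sum_nonneg fun i _ => hw i), inv_mul_eq_div]

end Measures

section InfiniteVolume

open MeasureTheory Filter Real Finset

lemma gibbsMeasureN_real_le {N : ℕ} {β : ℝ} (hβ : 0 ≤ β) {P : Finset Plaq}
    (hP : P ⊆ cubePlaqs (fun _ => -(N : ℤ)) (2 * N)) :
    (gibbsMeasureN N β).real {x | ∀ p ∈ P, plaqSpinB x p = -1} ≤
      2 ^ P.card * exp (-2 * β * P.card) := by
  classical
  rw [gibbsMeasureN, measureReal_smul_sum_dirac (fun _ => (exp_pos _).le) _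
    (isClopen_setOf_forall_plaqSpinB_eq_neg_one P).isClosed.measurableSet,
    div_le_iff₀ (sum_pos (fun _ _ => exp_pos _) univ_nonempty)]
  exact sum_exp_energy_filter_le hβ hP

lemma eventually_mem_cubeV (v : V4) :
    ∀ᶠ N : ℕ in atTop, v ∈ cubeV (fun _ => -(N : ℤ)) (2 * N) := by
  simp only [cubeV, Fintype.mem_piFinset, mem_Icc, eventually_all]
  intro m
  filter_upwards [eventually_ge_atTop (v m).natAbs] with N hN
  omega

lemma eventually_subset_cubePlaqs {P : Finset Plaq} (hP : ∀ p ∈ P, p.2.1 < p.2.2) :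
    ∀ᶠ N : ℕ in atTop, P ⊆ cubePlaqs (fun _ => -(N : ℤ)) (2 * N) := by
  refine (eventually_all_finset P).2 fun p hp => ?_
  filter_upwards [(eventually_all_finset (plaqVerts p)).2 fun v _ => eventually_mem_cubeV v]
    with N hN
  simp only [cubePlaqs, mem_filter, mem_product, mem_univ, and_true]
  exact ⟨hN p.1 (by simp [plaqVerts]), hP p hp, hN⟩

lemma IsGibbsLimit.measureReal_le {β : ℝ} {μ : Measure (Edge → Bool)} (hμ : IsGibbsLimit β μ)
    {A : Set (Edge → Bool)} (hA : IsClopen A) {c : ℝ}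
    (hc : ∀ᶠ N in atTop, (gibbsMeasureN N β).real A ≤ c) : μ.real A ≤ c := by
  obtain ⟨-, φ, hφ, hconv⟩ := hμ
  have hlim := hconv (A.indicator 1) (hA.continuous_indicator continuous_const)
  simp only [integral_indicator_one hA.isClosed.measurableSet] at hlim
  exact le_of_tendsto hlim (hφ.tendsto_atTop.eventually hc)

end InfiniteVolume

/-- **Theorem 6.1 (Rarity of negative plaquettes).**
There is `β₀ > 0` such that the following holds whenever `β ≥ β₀`.  Let `μ_β` be any
subsequential weak limit of the finite-volume Ising lattice gauge measures.  For any finite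
set `P` of plaquettes of `ℤ⁴` there is a constant `C_P`, depending only on `P`, such that the
`μ_β`-probability that `σ_p = -1` for all `p ∈ P` is at most `C_P e^{-2β|P|}`. -/
theorem rarity_of_negative_plaquettes :
    ∃ β₀ : ℝ, 0 < β₀ ∧
      ∀ P : Finset Plaq, (∀ p ∈ P, p.2.1 < p.2.2) →
        ∃ CP : ℝ, 0 < CP ∧
          ∀ β : ℝ, β₀ ≤ β →
          ∀ μ : MeasureTheory.Measure (Edge → Bool), IsGibbsLimit β μ →
            (μ {x | ∀ p ∈ P, plaqSpinB x p = -1}).toReal ≤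
              CP * Real.exp (-2 * β * (P.card : ℝ)) := by
  refine ⟨1, one_pos, fun P hP => ⟨2 ^ P.card, by positivity, fun β hβ μ hμ => ?_⟩⟩
  exact hμ.measureReal_le (isClopen_setOf_forall_plaqSpinB_eq_neg_one P)
    ((eventually_subset_cubePlaqs hP).mono fun N hN => gibbsMeasureN_real_le (by linarith) hN)
end

section
/- There exist β₀ > 0 and a universal constant C > 0 such that the following holds whenever β ≥ β₀. Let μ_β be any subsequential weak limit of the finite-volume Ising lattice gauge measures. Then for every nonempty generalized loop γ in ℤ⁴ with ℓ edges, of which ℓ₀ are corner edges, |μ_β(W_γ)| ≤ exp(−C·(ℓ−ℓ₀)·e^{−12β}). -/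
open MeasureTheory

/-- The Wilson loop variable `W_γ = ∏_{e ∈ γ} σ_e` of a configuration `x : Edge → Bool`. -/
noncomputable def wilsonB (γ : Finset Edge) (x : Edge → Bool) : ℝ :=
  ∏ e ∈ γ, boolSpin (x e)

/-! Let `S` be the set of non-corner edges of `γ`; no plaquette contains two of them. Group the
configurations into orbits under the spin flips on subsets of `S`. Along an orbit `W_γ` changes
sign with each flip, while the weight `exp (β ∑_p σ_p)` factorizes over `S`: flipping `e`
multiplies it by `r_e = exp (β Δ_e)` with `|Δ_e| ≤ 12`. Hence on each orbit the sum of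
`W_γ · weight` is at most `∏_e |1 - r_e| / (1 + r_e) ≤ tanh (6β) ^ |S|` times the sum of the
weights, uniformly in the volume, and `tanh (6β) ≤ exp (-e^{-12β})`. Since `W_γ` is continuous,
the bound passes to the weak limit. -/

open Finset

lemma abs_one_sub_le_mul_one_add {q r : ℝ} (hq : 0 ≤ q) (hqr : q ≤ r) (hrq : q * r ≤ 1) :
    |1 - r| ≤ (1 - q) / (1 + q) * (1 + r) := by
  rw [div_mul_eq_mul_div, le_div_iff₀ (by linarith)]
  rcases abs_cases (1 - r) with ⟨h, -⟩ | ⟨h, -⟩ <;> rw [h] <;> nlinarith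

/-- This is `tanh (6 * β)`. -/
noncomputable def flipFactor (β : ℝ) : ℝ :=
  (1 - Real.exp (-12 * β)) / (1 + Real.exp (-12 * β))

lemma flipFactor_nonneg {β : ℝ} (hβ : 0 ≤ β) : 0 ≤ flipFactor β := by
  have hq : Real.exp (-12 * β) ≤ 1 := Real.exp_le_one_iff.2 (by linarith)
  exact div_nonneg (by linarith) (by positivity)

lemma flipFactor_le_exp {β : ℝ} (hβ : 0 ≤ β) :
    flipFactor β ≤ Real.exp (-Real.exp (-12 * β)) := by
  have hq : Real.exp (-12 * β) ≤ 1 := Real.exp_le_one_iff.2 (by linarith)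
  have hq₀ := Real.exp_pos (-12 * β)
  calc flipFactor β ≤ 1 - Real.exp (-12 * β) := by
        rw [flipFactor, div_le_iff₀ (by positivity)]
        nlinarith
    _ ≤ Real.exp (-Real.exp (-12 * β)) := by linarith [Real.add_one_le_exp (-Real.exp (-12 * β))]

def NoCommonPlaq (e e' : Edge) : Prop :=
  ∀ p : Plaq, p.2.1 < p.2.2 → e ∈ plaqEdges p → e' ∉ plaqEdges p

def PlaqSeparated (S : Finset Edge) : Prop :=
  (S : Set Edge).Pairwise NoCommonPlaq

section Cube

variable {a : V4} {w : ℕ}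

def flipOn (u : Finset Edge) (σ : Config a w) : Config a w :=
  fun x => if (x : Edge) ∈ u then !σ x else σ x

@[simp]
lemma flipOn_empty (σ : Config a w) : flipOn ∅ σ = σ := by
  funext x; simp [flipOn]

lemma flipOn_flipOn {u v : Finset Edge} (h : Disjoint u v) (σ : Config a w) :
    flipOn u (flipOn v σ) = flipOn (u ∪ v) σ := by
  funext x
  by_cases hu : (x : Edge) ∈ u
  · simp [flipOn, hu, disjoint_left.1 h hu]
  · by_cases hv : (x : Edge) ∈ v <;> simp [flipOn, hu, hv]

lemma flipOn_involutive (u : Finset Edge) : Function.Involutive (flipOn (a := a) (w := w) u) := by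
  intro σ; funext x; by_cases hu : (x : Edge) ∈ u <;> simp [flipOn, hu]

lemma boolSpin_not (b : Bool) : boolSpin (!b) = -boolSpin b := by
  cases b <;> simp [boolSpin]

lemma abs_boolSpin_le_one (b : Bool) : |boolSpin b| ≤ 1 := by
  cases b <;> simp [boolSpin]

lemma abs_extSpin_le_one (σ : Config a w) (e : Edge) : |extSpin a w σ e| ≤ 1 := by
  unfold extSpin; split
  · exact abs_boolSpin_le_one _
  · simp

lemma extSpin_flipOn_of_notMem {u : Finset Edge} {e : Edge} (h : e ∉ u) (σ : Config a w) :
    extSpin a w (flipOn u σ) e = extSpin a w σ e := by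
  unfold extSpin; split
  · simp [flipOn, h]
  · rfl

lemma extSpin_flipOn_of_mem {u : Finset Edge} {e : Edge} (h : e ∈ u) (he : e ∈ cubeEdges a w)
    (σ : Config a w) : extSpin a w (flipOn u σ) e = -extSpin a w σ e := by
  simp [extSpin, he, flipOn, h, boolSpin_not]

lemma plaqSpin_congr {f g : Edge → ℝ} {p : Plaq} (h : ∀ e ∈ plaqEdges p, f e = g e) :
    plaqSpin f p = plaqSpin g p := by
  simp only [plaqSpin, plaqEdges, mem_insert, mem_singleton] at h ⊢
  simp [h]

lemma plaqSpin_flipOn_of_disjoint {u : Finset Edge} {p : Plaq} (h : Disjoint u (plaqEdges p))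
    (σ : Config a w) : plaqSpin (extSpin a w (flipOn u σ)) p = plaqSpin (extSpin a w σ) p :=
  plaqSpin_congr fun _ he => extSpin_flipOn_of_notMem (disjoint_right.1 h he) σ

noncomputable def energyDiff (e : Edge) (σ : Config a w) : ℝ :=
  energy a w (flipOn {e} σ) - energy a w σ

lemma energyDiff_eq_sum (e : Edge) (σ : Config a w) :
    energyDiff e σ = ∑ p ∈ cubePlaqs a w,
      (plaqSpin (extSpin a w (flipOn {e} σ)) p - plaqSpin (extSpin a w σ) p) := by
  rw [energyDiff, energy, energy, sum_sub_distrib]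

lemma disjoint_plaqEdges_of_noCommonPlaq {e : Edge} {u : Finset Edge}
    (hu : ∀ e' ∈ u, NoCommonPlaq e e') {p : Plaq} (hp : p ∈ cubePlaqs a w) (he : e ∈ plaqEdges p) :
    Disjoint u (plaqEdges p) :=
  disjoint_left.2 fun e' he' => hu e' he' p (mem_filter.1 hp).2.1 he

lemma energyDiff_flipOn {e : Edge} {u : Finset Edge} (he : e ∉ u)
    (hu : ∀ e' ∈ u, NoCommonPlaq e e') (σ : Config a w) :
    energyDiff e (flipOn u σ) = energyDiff e σ := by
  have hcomm : flipOn {e} (flipOn u σ) = flipOn u (flipOn {e} σ) := by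
    rw [flipOn_flipOn (disjoint_singleton_left.2 he),
      flipOn_flipOn (disjoint_singleton_right.2 he), union_comm]
  rw [energyDiff_eq_sum, energyDiff_eq_sum, hcomm]
  refine sum_congr rfl fun p hp => ?_
  by_cases hep : e ∈ plaqEdges p
  · have hdisj := disjoint_plaqEdges_of_noCommonPlaq hu hp hep
    rw [plaqSpin_flipOn_of_disjoint hdisj, plaqSpin_flipOn_of_disjoint hdisj]
  · have hdisj : Disjoint {e} (plaqEdges p) := disjoint_singleton_left.2 hep
    rw [← hcomm, plaqSpin_flipOn_of_disjoint hdisj, plaqSpin_flipOn_of_disjoint hdisj,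
      sub_self, sub_self]

lemma energy_flipOn {u : Finset Edge} (hu : PlaqSeparated u) (σ : Config a w) :
    energy a w (flipOn u σ) = energy a w σ + ∑ e ∈ u, energyDiff e σ := by
  induction u using Finset.induction_on with
  | empty => simp
  | @insert e u he ih =>
    have hsep : ∀ e' ∈ u, NoCommonPlaq e e' := fun e' he' =>
      hu (mem_insert_self e u) (mem_insert_of_mem he') fun h => he (h ▸ he')
    rw [sum_insert he, add_left_comm, ← ih (hu.mono (subset_insert e u)),
      ← energyDiff_flipOn he hsep, energyDiff, insert_eq,
      ← flipOn_flipOn (disjoint_singleton_left.2 he)]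
    ring

lemma card_filter_mem_plaqEdges_le (e : Edge) :
    #{p ∈ cubePlaqs a w | e ∈ plaqEdges p} ≤ 6 := by
  let dirs := univ.erase e.2
  let plaqAt (x : V4) (j : Fin 4) : Plaq := (x, min e.2 j, max e.2 j)
  have hsub : {p ∈ cubePlaqs a w | e ∈ plaqEdges p} ⊆
      dirs.image (fun j => plaqAt e.1 j) ∪ dirs.image (fun j => plaqAt (e.1 - unitVec j) j) := by
    intro p hp
    obtain ⟨hp, hep⟩ := mem_filter.1 hp
    obtain ⟨y, i, j⟩ := p
    have hij : i < j := (mem_filter.1 hp).2.1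
    simp only [plaqEdges, mem_insert, mem_singleton] at hep
    simp only [dirs, plaqAt, mem_union, mem_image, mem_erase, mem_univ, and_true]
    rcases hep with rfl | rfl | rfl | rfl
    · exact Or.inl ⟨j, hij.ne', by simp [hij.le]⟩
    · exact Or.inl ⟨i, hij.ne, by simp [hij.le]⟩
    · exact Or.inr ⟨i, hij.ne, by simp [hij.le]⟩
    · exact Or.inr ⟨j, hij.ne', by simp [hij.le]⟩
  have hdirs : #dirs = 3 := by simp [dirs]
  calc #{p ∈ cubePlaqs a w | e ∈ plaqEdges p}
      ≤ #(dirs.image (fun j => plaqAt e.1 j)) +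
          #(dirs.image (fun j => plaqAt (e.1 - unitVec j) j)) :=
        (card_le_card hsub).trans (card_union_le _ _)
    _ ≤ 3 + 3 := by gcongr <;> exact card_image_le.trans hdirs.le

lemma abs_plaqSpin_extSpin_le_one (σ : Config a w) (p : Plaq) :
    |plaqSpin (extSpin a w σ) p| ≤ 1 := by
  have h := abs_extSpin_le_one σ
  simp only [plaqSpin, abs_mul]
  exact mul_le_one₀ (mul_le_one₀ (mul_le_one₀ (h _) (abs_nonneg _) (h _)) (abs_nonneg _) (h _))
    (abs_nonneg _) (h _)

lemma abs_energyDiff_le (e : Edge) (σ : Config a w) : |energyDiff e σ| ≤ 12 := by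
  have hzero : ∀ p ∈ cubePlaqs a w, e ∉ plaqEdges p →
      plaqSpin (extSpin a w (flipOn {e} σ)) p - plaqSpin (extSpin a w σ) p = 0 :=
    fun p _ hep => by rw [plaqSpin_flipOn_of_disjoint (disjoint_singleton_left.2 hep), sub_self]
  rw [energyDiff_eq_sum, ← sum_filter_of_ne fun p hp hne => not_not.1 (mt (hzero p hp) hne)]
  calc _ ≤ ∑ p ∈ cubePlaqs a w with e ∈ plaqEdges p, (2 : ℝ) := by
        refine (abs_sum_le_sum_abs _ _).trans (sum_le_sum fun p _ => ?_)
        have h₁ := abs_plaqSpin_extSpin_le_one (flipOn {e} σ) p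
        have h₂ := abs_plaqSpin_extSpin_le_one σ p
        linarith [abs_sub (plaqSpin (extSpin a w (flipOn {e} σ)) p) (plaqSpin (extSpin a w σ) p)]
    _ ≤ 6 * 2 := by
        rw [sum_const, nsmul_eq_mul]
        gcongr
        exact_mod_cast card_filter_mem_plaqEdges_le e
    _ = 12 := by norm_num

lemma abs_one_sub_exp_energyDiff_le {β : ℝ} (hβ : 0 ≤ β) (e : Edge) (σ : Config a w) :
    |1 - Real.exp (β * energyDiff e σ)| ≤ flipFactor β * (1 + Real.exp (β * energyDiff e σ)) := by
  obtain ⟨hlo, hhi⟩ := abs_le.1 (abs_energyDiff_le e σ)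
  refine abs_one_sub_le_mul_one_add (Real.exp_nonneg _) (Real.exp_le_exp.2 (by nlinarith)) ?_
  rw [← Real.exp_add, Real.exp_le_one_iff]
  nlinarith

lemma sum_comp_flipOn (u : Finset Edge) (F : Config a w → ℝ) :
    ∑ σ, F (flipOn u σ) = ∑ σ, F σ :=
  Equiv.sum_comp ((flipOn_involutive u).toPerm _) F

lemma sum_powerset_sum_comp_flipOn (S : Finset Edge) (F : Config a w → ℝ) :
    ∑ u ∈ S.powerset, ∑ σ, F (flipOn u σ) = 2 ^ #S * ∑ σ, F σ := by
  simp [sum_comp_flipOn, card_powerset]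

lemma exp_energy_flipOn (β : ℝ) {u : Finset Edge} (hu : PlaqSeparated u) (σ : Config a w) :
    Real.exp (β * energy a w (flipOn u σ)) =
      Real.exp (β * energy a w σ) * ∏ e ∈ u, Real.exp (β * energyDiff e σ) := by
  rw [energy_flipOn hu, mul_add, Real.exp_add, mul_sum, Real.exp_sum]

lemma sum_powerset_mul_exp_energy_flipOn (β : ℝ) {S : Finset Edge} (hS : PlaqSeparated S)
    (G : Config a w → ℝ) (c : ℝ) (hG : ∀ u ⊆ S, ∀ σ, G (flipOn u σ) = c ^ #u * G σ)
    (σ : Config a w) :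
    ∑ u ∈ S.powerset, G (flipOn u σ) * Real.exp (β * energy a w (flipOn u σ)) =
      G σ * Real.exp (β * energy a w σ) * ∏ e ∈ S, (1 + c * Real.exp (β * energyDiff e σ)) := by
  rw [prod_one_add, mul_sum]
  refine sum_congr rfl fun u hu => ?_
  have huS := mem_powerset.1 hu
  rw [hG u huS, exp_energy_flipOn β (hS.mono huS), prod_mul_distrib, prod_const]
  ring

lemma wilson_flipOn {γ u : Finset Edge} (huγ : u ⊆ γ) (huE : u ⊆ cubeEdges a w)
    (σ : Config a w) :
    wilson γ (extSpin a w (flipOn u σ)) = (-1) ^ #u * wilson γ (extSpin a w σ) := by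
  have hsign : ∀ e ∈ γ, extSpin a w (flipOn u σ) e =
      (if e ∈ u then -1 else 1) * extSpin a w σ e := by
    intro e _
    split_ifs with he
    · rw [extSpin_flipOn_of_mem he (huE he), neg_one_mul]
    · rw [extSpin_flipOn_of_notMem he, one_mul]
  rw [wilson, wilson, prod_congr rfl hsign, prod_mul_distrib, prod_ite_mem, inter_eq_right.2 huγ,
    prod_const]

lemma abs_wilson_le_one (γ : Finset Edge) (σ : Config a w) :
    |wilson γ (extSpin a w σ)| ≤ 1 := by
  rw [wilson, abs_prod]
  exact prod_le_one (fun _ _ => abs_nonneg _) fun e _ => abs_extSpin_le_one σ e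

lemma abs_sum_powerset_wilson_mul_exp_le {β : ℝ} (hβ : 0 ≤ β) {γ S : Finset Edge}
    (hSγ : S ⊆ γ) (hSE : S ⊆ cubeEdges a w) (hS : PlaqSeparated S) (σ : Config a w) :
    |∑ u ∈ S.powerset, wilson γ (extSpin a w (flipOn u σ)) *
        Real.exp (β * energy a w (flipOn u σ))| ≤
      flipFactor β ^ #S * ∑ u ∈ S.powerset, Real.exp (β * energy a w (flipOn u σ)) := by
  have hW := sum_powerset_mul_exp_energy_flipOn β hS (fun τ => wilson γ (extSpin a w τ)) (-1)
    (fun u hu τ => wilson_flipOn (hu.trans hSγ) (hu.trans hSE) τ) σ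
  have hZ := sum_powerset_mul_exp_energy_flipOn β hS (fun _ => 1) 1 (by simp) σ
  simp only [one_mul, neg_one_mul, ← sub_eq_add_neg] at hW hZ
  rw [hW, hZ, abs_mul, abs_mul, abs_prod, abs_of_pos (Real.exp_pos _)]
  have hprod : ∏ e ∈ S, |1 - Real.exp (β * energyDiff e σ)| ≤
      flipFactor β ^ #S * ∏ e ∈ S, (1 + Real.exp (β * energyDiff e σ)) := by
    rw [← prod_const, ← prod_mul_distrib]
    exact prod_le_prod (fun _ _ => abs_nonneg _)
      fun e _ => abs_one_sub_exp_energyDiff_le hβ e σ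
  calc |wilson γ (extSpin a w σ)| * Real.exp (β * energy a w σ) *
        ∏ e ∈ S, |1 - Real.exp (β * energyDiff e σ)|
      ≤ 1 * Real.exp (β * energy a w σ) *
        (flipFactor β ^ #S * ∏ e ∈ S, (1 + Real.exp (β * energyDiff e σ))) := by
        gcongr
        exact abs_wilson_le_one γ σ
    _ = _ := by ring

lemma abs_sum_wilson_mul_exp_le {β : ℝ} (hβ : 0 ≤ β) {γ S : Finset Edge}
    (hSγ : S ⊆ γ) (hSE : S ⊆ cubeEdges a w) (hS : PlaqSeparated S) :
    |∑ σ : Config a w, wilson γ (extSpin a w σ) * Real.exp (β * energy a w σ)| ≤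
      flipFactor β ^ #S * ∑ σ : Config a w, Real.exp (β * energy a w σ) := by
  have h2 : (0 : ℝ) < 2 ^ #S := by positivity
  refine le_of_mul_le_mul_left ?_ h2
  calc 2 ^ #S * |∑ σ : Config a w, wilson γ (extSpin a w σ) * Real.exp (β * energy a w σ)|
      = |∑ σ : Config a w, ∑ u ∈ S.powerset, wilson γ (extSpin a w (flipOn u σ)) *
          Real.exp (β * energy a w (flipOn u σ))| := by
        rw [sum_comm, sum_powerset_sum_comp_flipOn S
          fun τ => wilson γ (extSpin a w τ) * Real.exp (β * energy a w τ), abs_mul, abs_of_pos h2]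
    _ ≤ ∑ σ : Config a w, flipFactor β ^ #S *
          ∑ u ∈ S.powerset, Real.exp (β * energy a w (flipOn u σ)) :=
        (abs_sum_le_sum_abs _ _).trans (sum_le_sum fun σ _ =>
          abs_sum_powerset_wilson_mul_exp_le hβ hSγ hSE hS σ)
    _ = 2 ^ #S * (flipFactor β ^ #S * ∑ σ : Config a w, Real.exp (β * energy a w σ)) := by
        rw [← mul_sum, sum_comm,
          sum_powerset_sum_comp_flipOn S fun τ => Real.exp (β * energy a w τ)]
        ring

end Cube

lemma continuous_wilsonB (γ : Finset Edge) : Continuous (wilsonB γ) :=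
  continuous_finsetProd γ fun e _ =>
    (continuous_of_discreteTopology (f := boolSpin)).comp (continuous_apply e)

lemma wilsonB_extBool (a : V4) (w : ℕ) (γ : Finset Edge) (σ : Config a w) :
    wilsonB γ (extBool a w σ) = wilson γ (extSpin a w σ) := by
  refine prod_congr rfl fun e _ => ?_
  unfold extBool extSpin
  split
  · rfl
  · simp [boolSpin]

lemma integral_gibbsMeasureN (N : ℕ) (β : ℝ) (f : (Edge → Bool) → ℝ) :
    ∫ x, f x ∂gibbsMeasureN N β =
      (∑ σ : Config (fun _ => -(N : ℤ)) (2 * N),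
          Real.exp (β * energy (fun _ => -(N : ℤ)) (2 * N) σ))⁻¹ *
        ∑ σ : Config (fun _ => -(N : ℤ)) (2 * N),
          f (extBool (fun _ => -(N : ℤ)) (2 * N) σ) *
            Real.exp (β * energy (fun _ => -(N : ℤ)) (2 * N) σ) := by
  have hint (x : Edge → Bool) (c : ENNReal) (hc : c ≠ ⊤) : Integrable f (c • Measure.dirac x) :=
    (integrable_dirac enorm_lt_top).smul_measure hc
  rw [gibbsMeasureN, integral_smul_measure,
    integral_finsetSum_measure fun σ _ => hint _ _ ENNReal.ofReal_ne_top, ENNReal.toReal_inv, ENNReal.toReal_sum fun σ _ => ENNReal.ofReal_ne_top, smul_eq_mul]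
  simp only [ENNReal.toReal_ofReal (Real.exp_nonneg _), integral_smul_measure, integral_dirac,
    smul_eq_mul, mul_comm]

lemma abs_integral_wilsonB_gibbsMeasureN_le {β : ℝ} (hβ : 0 ≤ β) (N : ℕ) {γ S : Finset Edge}
    (hγ : γ ⊆ cubeEdges (fun _ => -(N : ℤ)) (2 * N)) (hSγ : S ⊆ γ) (hS : PlaqSeparated S) :
    |∫ x, wilsonB γ x ∂gibbsMeasureN N β| ≤ flipFactor β ^ #S := by
  have hZ : 0 < ∑ σ : Config (fun _ => -(N : ℤ)) (2 * N),
      Real.exp (β * energy (fun _ => -(N : ℤ)) (2 * N) σ) :=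
    sum_pos (fun _ _ => Real.exp_pos _) univ_nonempty
  rw [integral_gibbsMeasureN]
  simp only [wilsonB_extBool]
  rw [abs_mul, abs_inv, abs_of_pos hZ, inv_mul_le_iff₀ hZ]
  exact (abs_sum_wilson_mul_exp_le hβ hSγ (hSγ.trans hγ) hS).trans_eq (mul_comm _ _)

lemma mem_cubeEdges_of_natAbs_lt {N : ℕ} {e : Edge} (he : ∀ m, (e.1 m).natAbs < N) :
    e ∈ cubeEdges (fun _ => -(N : ℤ)) (2 * N) := by
  have hmem : ∀ x : V4, (∀ m, (x m).natAbs ≤ N) → x ∈ cubeV (fun _ => -(N : ℤ)) (2 * N) := by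
    intro x hx
    simp only [cubeV, Fintype.mem_piFinset, mem_Icc]
    intro m
    have := hx m
    omega
  refine mem_filter.2 ⟨mem_product.2 ⟨hmem _ fun m => (he m).le, mem_univ _⟩, hmem _ fun m => ?_⟩
  have := he m
  simp only [Pi.add_apply, unitVec]
  split_ifs <;> omega

lemma eventually_subset_cubeEdges (γ : Finset Edge) :
    ∀ᶠ N : ℕ in Filter.atTop, γ ⊆ cubeEdges (fun _ => -(N : ℤ)) (2 * N) := by
  refine (Filter.eventually_all_finset γ).2 fun e _ => ?_
  filter_upwards [Filter.eventually_gt_atTop (univ.sup fun m => (e.1 m).natAbs)] with N hN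
  exact mem_cubeEdges_of_natAbs_lt fun m =>
    (le_sup (f := fun m => (e.1 m).natAbs) (mem_univ m)).trans_lt hN

lemma exists_plaqSeparated_card_eq (γ : Finset Edge) :
    ∃ S ⊆ γ, PlaqSeparated S ∧ (#S : ℝ) = #γ - cornerCount γ := by
  classical
  refine ⟨{e ∈ γ | ¬IsCornerEdge γ e}, filter_subset _ _, ?_, ?_⟩
  · intro e he e' he' hne p hp hep hep'
    obtain ⟨heγ, hnc⟩ := mem_filter.1 he
    exact hnc ⟨heγ, e', (mem_filter.1 he').1, hne.symm, p, hp, hep, hep'⟩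
  · have hcorner : cornerCount γ = #{e ∈ γ | IsCornerEdge γ e} := by
      rw [cornerCount, ← Set.ncard_coe_finset, coe_filter]
      rfl
    rw [hcorner, eq_sub_iff_add_eq, add_comm]
    exact_mod_cast card_filter_add_card_filter_not _

/-- **Lemma 7.2 (Wilson loop expectation: long loops).**
There are `β₀ > 0` and a universal constant `C > 0` such that the following holds whenever
`β ≥ β₀`.  Let `μ_β` be any subsequential weak limit of the finite-volume Ising lattice
gauge measures.  For every nonempty generalized loop `γ` with `ℓ` edges, of which `ℓ₀` are
corner edges, `|μ_β(W_γ)| ≤ e^{−C(ℓ−ℓ₀)e^{−12β}}`. -/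
theorem wilson_loop_long_loops :
    ∃ β₀ C : ℝ, 0 < β₀ ∧ 0 < C ∧
      ∀ β : ℝ, β₀ ≤ β →
      ∀ μ : MeasureTheory.Measure (Edge → Bool), IsGibbsLimit β μ →
      ∀ γ : Finset Edge, IsGenLoop γ →
        |∫ x, wilsonB γ x ∂μ| ≤
          Real.exp (-C * ((γ.card : ℝ) - (cornerCount γ : ℝ)) * Real.exp (-12 * β)) := by
  refine ⟨1, 1, one_pos, one_pos, fun β hβ μ ⟨_, φ, hφ, hlim⟩ γ _ => ?_⟩
  have hβ₀ : 0 ≤ β := zero_le_one.trans hβ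
  obtain ⟨S, hSγ, hS, hcard⟩ := exists_plaqSeparated_card_eq γ
  refine le_of_tendsto (hlim _ (continuous_wilsonB γ)).abs ?_
  filter_upwards [hφ.tendsto_atTop.eventually (eventually_subset_cubeEdges γ)] with k hk
  calc |∫ x, wilsonB γ x ∂gibbsMeasureN (φ k) β|
      ≤ flipFactor β ^ #S := abs_integral_wilsonB_gibbsMeasureN_le hβ₀ (φ k) hk hSγ hS
    _ ≤ Real.exp (-Real.exp (-12 * β)) ^ #S :=
        pow_le_pow_left₀ (flipFactor_nonneg hβ₀) (flipFactor_le_exp hβ₀) _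
    _ = _ := by rw [← Real.exp_nat_mul, hcard]; ring_nf
end

section
/- For any spin configuration σ on the edges of ℤ⁴, the set of negative plaquettes of σ can be partitioned into vortices; that is, the set of negative plaquettes is a disjoint union of surfaces, each of whose dual surfaces is closed and connected. -/
/-!
The dual lattice `*ℤ⁴` is identified with `ℤ⁴`: the dual vertex `y = z + (1/2,1/2,1/2,1/2)`
(the center of the unit 4-cell with base vertex `z`) is identified with the integer point
`z`, and cells of the dual lattice (which span in the negative coordinate directions from
their dual base vertex) are recorded by their lowest corner, so that plaquettes of the dual
lattice are again elements of `Plaq`.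
-/

/-- The two directions of `Fin 4` complementary to `{i, j}`. -/
def compl2 (i j : Fin 4) : Finset (Fin 4) := Finset.univ \ {i, j}

lemma compl2_nonempty (i j : Fin 4) : (compl2 i j).Nonempty := by
  have h2 : ({i, j} : Finset (Fin 4)).card ≤ 2 := by
    refine le_trans (Finset.card_insert_le _ _) ?_
    simp
  rw [compl2, Finset.sdiff_nonempty]
  intro hsub
  have h4 := Finset.card_le_card hsub
  simp [Finset.card_univ] at h4
  omega

/-- The Hodge dual of the plaquette `(x, i, j)` of `ℤ⁴`: the plaquette of the dual lattice
spanned by the two complementary directions `k < l`, which (as an unoriented square, in the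
integer coordinates for `*ℤ⁴` described above) has lowest corner `x - e_k - e_l`. -/
def dualPlaq (p : Plaq) : Plaq :=
  let k := (compl2 p.2.1 p.2.2).min' (compl2_nonempty _ _)
  let l := (compl2 p.2.1 p.2.2).max' (compl2_nonempty _ _)
  (p.1 - unitVec k - unitVec l, k, l)

/-- The boundary of a surface (set of plaquettes): the set of edges contained in an odd
number of plaquettes of the surface. -/
def surfBdry (S : Set Plaq) : Set Edge :=
  {e | Odd {p | p ∈ S ∧ e ∈ plaqEdges p}.ncard}

/-- A surface is closed if its boundary is empty. -/
def SurfClosed (S : Set Plaq) : Prop := surfBdry S = ∅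

/-- The dual surface `*S`: the set of Hodge duals of the plaquettes of `S`. -/
def dualSurf (S : Set Plaq) : Set Plaq := dualPlaq '' S

/-- Two plaquettes are adjacent if they share a common edge. -/
def PlaqAdj (p q : Plaq) : Prop := p ≠ q ∧ (plaqEdges p ∩ plaqEdges q).Nonempty

/-- A surface is connected if it is connected with respect to adjacency of plaquettes. -/
def SurfConnected (S : Set Plaq) : Prop :=
  ∀ p ∈ S, ∀ q ∈ S, Relation.ReflTransGen (fun u v => u ∈ S ∧ v ∈ S ∧ PlaqAdj u v) p q

/-- The set of negative plaquettes of the configuration `x` (those with `σ_p = -1`). -/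
noncomputable def negPlaqs (x : Edge → Bool) : Set Plaq :=
  {p | p.2.1 < p.2.2 ∧ plaqSpin (fun e => boolSpin (x e)) p = -1}

/-- A vortex of the configuration `x`: a nonempty surface all of whose plaquettes are
negative plaquettes of `x`, such that the dual surface is closed and connected. -/
noncomputable def IsVortex (x : Edge → Bool) (S : Set Plaq) : Prop :=
  S.Nonempty ∧ (∀ p ∈ S, p ∈ negPlaqs x) ∧
    SurfClosed (dualSurf S) ∧ SurfConnected (dualSurf S)


/-!
Join two negative plaquettes when their dual plaquettes share an edge, and take the vortices to
be the connected components of this graph; their dual surfaces are connected by construction.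
The plaquettes whose duals contain a given dual edge are the six faces of a 3-cell of `ℤ⁴`, and
an even number of them is negative, because each edge of the 3-cell lies on exactly two faces.
Since the negative ones among them pairwise share that dual edge, a component contains all of
them or none, so every dual surface is closed.
-/

open SimpleGraph

def plaqXor (x : Edge → Bool) (p : Plaq) : Bool :=
  (((x (p.1, p.2.1)).xor (x (p.1, p.2.2))).xor (x (p.1 + unitVec p.2.1, p.2.2))).xor
    (x (p.1 + unitVec p.2.2, p.2.1))

lemma mem_negPlaqs_iff (x : Edge → Bool) (p : Plaq) :
    p ∈ negPlaqs x ↔ p.2.1 < p.2.2 ∧ plaqXor x p = true := by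
  unfold negPlaqs
  rcases h₁ : x (p.1, p.2.1) <;> rcases h₂ : x (p.1, p.2.2) <;>
    rcases h₃ : x (p.1 + unitVec p.2.1, p.2.2) <;> rcases h₄ : x (p.1 + unitVec p.2.2, p.2.1) <;>
    simp [boolSpin, plaqXor, plaqSpin, h₁, h₂, h₃, h₄] <;> norm_num

lemma unitVec_ne_zero (d : Fin 4) : unitVec d ≠ 0 := fun h => by
  simpa [unitVec] using congrFun h d

lemma add_unitVec_ne_self (z : V4) (d : Fin 4) : z + unitVec d ≠ z := by
  simpa using unitVec_ne_zero d

def cubeFaces (z : V4) (a b c : Fin 4) : List Plaq :=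
  [(z, a, b), (z + unitVec c, a, b), (z, a, c), (z + unitVec b, a, c),
   (z, b, c), (z + unitVec a, b, c)]

lemma cubeFaces_nodup (z : V4) {a b c : Fin 4} (hab : a ≠ b) (hbc : b ≠ c) :
    (cubeFaces z a b c).Nodup := by
  simp [cubeFaces, (add_unitVec_ne_self _ _).symm, hab, hbc, unitVec_ne_zero]

/-- The `tᵢ` are the spins of the twelve edges of a 3-cell, the six entries its faces. -/
lemma even_countP_cube_xors : ∀ t₁ t₂ t₃ t₄ t₅ t₆ t₇ t₈ t₉ t₁₀ t₁₁ t₁₂ : Bool,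
    Even (List.countP id
      [((t₁.xor t₂).xor t₃).xor t₄, ((t₅.xor t₆).xor t₇).xor t₈,
       ((t₁.xor t₉).xor t₁₀).xor t₅, ((t₄.xor t₁₁).xor t₁₂).xor t₈,
       ((t₂.xor t₉).xor t₁₁).xor t₆, ((t₃.xor t₁₀).xor t₁₂).xor t₇]) := by
  decide

lemma even_countP_plaqXor_cubeFaces (x : Edge → Bool) (z : V4) (a b c : Fin 4) :
    Even ((cubeFaces z a b c).countP (plaqXor x)) := by
  rw [show (cubeFaces z a b c).countP (plaqXor x) = ((cubeFaces z a b c).map (plaqXor x)).countP id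
    from List.countP_map.symm]
  simp only [cubeFaces, List.map_cons, List.map_nil, plaqXor]
  rw [add_right_comm z (unitVec c) (unitVec a), add_right_comm z (unitVec c) (unitVec b),
    add_right_comm z (unitVec b) (unitVec a)]
  exact even_countP_cube_xors _ _ _ _ _ _ _ _ _ _ _ _

def otherDirs : Fin 4 → Fin 4 × Fin 4 × Fin 4
  | 0 => (1, 2, 3) | 1 => (0, 2, 3) | 2 => (0, 1, 3) | 3 => (0, 1, 2)

/-- The faces of the 3-cell of `ℤ⁴` dual to the edge `(y, m)` of `*ℤ⁴`. -/
def dualEdgeFaces (y : V4) (m : Fin 4) : List Plaq :=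
  cubeFaces (y + unitVec m) (otherDirs m).1 (otherDirs m).2.1 (otherDirs m).2.2

lemma dualEdgeFaces_nodup (y : V4) (m : Fin 4) : (dualEdgeFaces y m).Nodup := by
  fin_cases m <;> exact cubeFaces_nodup _ (by decide) (by decide)

lemma lt_of_mem_dualEdgeFaces {y : V4} {m : Fin 4} {p : Plaq} (hp : p ∈ dualEdgeFaces y m) :
    p.2.1 < p.2.2 := by
  fin_cases m <;>
    simp only [dualEdgeFaces, cubeFaces, otherDirs, List.mem_cons, List.not_mem_nil,
      or_false] at hp <;>
    rcases hp with rfl | rfl | rfl | rfl | rfl | rfl <;> dsimp only <;> decide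

lemma dualPlaq_apply (X : V4) :
    dualPlaq (X, 0, 1) = (X - unitVec 2 - unitVec 3, 2, 3) ∧
    dualPlaq (X, 0, 2) = (X - unitVec 1 - unitVec 3, 1, 3) ∧
    dualPlaq (X, 0, 3) = (X - unitVec 1 - unitVec 2, 1, 2) ∧
    dualPlaq (X, 1, 2) = (X - unitVec 0 - unitVec 3, 0, 3) ∧
    dualPlaq (X, 1, 3) = (X - unitVec 0 - unitVec 2, 0, 2) ∧
    dualPlaq (X, 2, 3) = (X - unitVec 0 - unitVec 1, 0, 1) :=
  ⟨rfl, rfl, rfl, rfl, rfl, rfl⟩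

lemma mem_plaqEdges_dualPlaq_iff (y : V4) (m : Fin 4) {p : Plaq} (hp : p.2.1 < p.2.2) :
    (y, m) ∈ plaqEdges (dualPlaq p) ↔ p ∈ dualEdgeFaces y m := by
  obtain ⟨X, i, j⟩ := p
  dsimp only at hp
  fin_cases i <;> fin_cases j <;> (try exact absurd hp (by decide)) <;> fin_cases m <;>
    simp [dualPlaq_apply, plaqEdges, dualEdgeFaces, cubeFaces, otherDirs, Prod.ext_iff] <;> grind

lemma dualPlaq_injOn : Set.InjOn dualPlaq {p | p.2.1 < p.2.2} := by
  rintro ⟨X, i, j⟩ (hp : i < j) ⟨Y, i', j'⟩ (hq : i' < j') h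
  have hdirs : ∀ i j i' j' : Fin 4, i < j → i' < j' →
      (compl2 i j).min' (compl2_nonempty _ _) = (compl2 i' j').min' (compl2_nonempty _ _) →
      (compl2 i j).max' (compl2_nonempty _ _) = (compl2 i' j').max' (compl2_nonempty _ _) →
      i = i' ∧ j = j' := by decide
  simp only [dualPlaq, Prod.mk.injEq] at h
  obtain ⟨rfl, rfl⟩ := hdirs i j i' j' hp hq h.2.1 h.2.2
  rw [sub_left_inj, sub_left_inj] at h
  rw [h.1]

lemma even_ncard_negPlaqs_dualPlaq_edge (x : Edge → Bool) (e : Edge) :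
    Even {p | p ∈ negPlaqs x ∧ e ∈ plaqEdges (dualPlaq p)}.ncard := by
  obtain ⟨y, m⟩ := e
  have hset : {p | p ∈ negPlaqs x ∧ (y, m) ∈ plaqEdges (dualPlaq p)} =
      (((dualEdgeFaces y m).filter (plaqXor x)).toFinset : Set Plaq) := by
    ext p
    simp only [Set.mem_ofPred_eq, List.coe_toFinset, List.mem_filter, mem_negPlaqs_iff]
    constructor
    · rintro ⟨⟨hp, hxor⟩, he⟩
      exact ⟨(mem_plaqEdges_dualPlaq_iff y m hp).1 he, hxor⟩
    · rintro ⟨hface, hxor⟩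
      have hp := lt_of_mem_dualEdgeFaces hface
      exact ⟨⟨hp, hxor⟩, (mem_plaqEdges_dualPlaq_iff y m hp).2 hface⟩
  rw [hset, Set.ncard_coe_finset, List.toFinset_card_of_nodup ((dualEdgeFaces_nodup y m).filter _),
    ← List.countP_eq_length_filter]
  exact even_countP_plaqXor_cubeFaces x _ _ _ _

def vortexGraph (x : Edge → Bool) : SimpleGraph Plaq where
  Adj u v := u ∈ negPlaqs x ∧ v ∈ negPlaqs x ∧ PlaqAdj (dualPlaq u) (dualPlaq v)
  symm := ⟨fun _ _ ⟨hu, hv, hne, he⟩ => ⟨hv, hu, hne.symm, by rwa [Finset.inter_comm]⟩⟩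
  loopless := ⟨fun _ ⟨_, _, hne, _⟩ => hne rfl⟩

lemma vortexGraph_adj {x : Edge → Bool} {u v : Plaq} :
    (vortexGraph x).Adj u v ↔
      u ∈ negPlaqs x ∧ v ∈ negPlaqs x ∧ PlaqAdj (dualPlaq u) (dualPlaq v) :=
  Iff.rfl

lemma mem_negPlaqs_of_reachable {x : Edge → Bool} {p q : Plaq} (hp : p ∈ negPlaqs x)
    (hpq : (vortexGraph x).Reachable p q) : q ∈ negPlaqs x := by
  rcases ((reachable_iff_reflTransGen p q).1 hpq).cases_tail with rfl | ⟨_, _, hadj⟩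
  exacts [hp, (vortexGraph_adj.1 hadj).2.1]

lemma SimpleGraph.ConnectedComponent.reflTransGen_of_mem_supp {V : Type*} {G : SimpleGraph V}
    (C : G.ConnectedComponent) {u v : V} (hu : u ∈ C.supp) (hv : v ∈ C.supp) :
    Relation.ReflTransGen (fun a b => a ∈ C.supp ∧ b ∈ C.supp ∧ G.Adj a b) u v := by
  induction (reachable_iff_reflTransGen u v).1 (C.reachable_of_mem_supp hu hv) with
  | refl => exact .refl
  | @tail b c hub hbc ih =>
    have hb : b ∈ C.supp :=
      (ConnectedComponent.sound ((reachable_iff_reflTransGen u b).2 hub).symm).trans hu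
    exact (ih hb).tail ⟨hb, C.mem_supp_of_adj_mem_supp hb hbc, hbc⟩

lemma surfConnected_dualSurf_supp {x : Edge → Bool} (C : (vortexGraph x).ConnectedComponent) :
    SurfConnected (dualSurf C.supp) := by
  rintro _ ⟨u, hu, rfl⟩ _ ⟨v, hv, rfl⟩
  exact (C.reflTransGen_of_mem_supp hu hv).lift dualPlaq
    fun a b ⟨ha, hb, hab⟩ =>
      ⟨Set.mem_image_of_mem _ ha, Set.mem_image_of_mem _ hb, (vortexGraph_adj.1 hab).2.2⟩

lemma surfClosed_dualSurf_supp {x : Edge → Bool} (C : (vortexGraph x).ConnectedComponent)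
    (hC : C.supp ⊆ negPlaqs x) : SurfClosed (dualSurf C.supp) := by
  have hinj : Set.InjOn dualPlaq (negPlaqs x) :=
    dualPlaq_injOn.mono fun p hp => ((mem_negPlaqs_iff x p).1 hp).1
  refine Set.eq_empty_iff_forall_notMem.2 fun e he => Nat.not_odd_iff_even.2 ?_ he
  have himage : {q | q ∈ dualSurf C.supp ∧ e ∈ plaqEdges q} =
      dualPlaq '' {p | p ∈ C.supp ∧ e ∈ plaqEdges (dualPlaq p)} :=
    (Set.image_inter_preimage dualPlaq C.supp {q | e ∈ plaqEdges q}).symm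
  rw [himage, (hinj.mono fun p hp => hC hp.1).ncard_image]
  rcases Set.eq_empty_or_nonempty {p | p ∈ C.supp ∧ e ∈ plaqEdges (dualPlaq p)}
    with hempty | ⟨u, hu, hue⟩
  · rw [hempty, Set.ncard_empty]
    exact ⟨0, rfl⟩
  have hall : {p | p ∈ C.supp ∧ e ∈ plaqEdges (dualPlaq p)} =
      {p | p ∈ negPlaqs x ∧ e ∈ plaqEdges (dualPlaq p)} := by
    ext v
    refine ⟨fun ⟨hv, hve⟩ => ⟨hC hv, hve⟩, fun ⟨hv, hve⟩ => ⟨?_, hve⟩⟩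
    by_cases huv : dualPlaq u = dualPlaq v
    · rwa [← hinj (hC hu) hv huv]
    · exact C.mem_supp_of_adj_mem_supp hu
        (vortexGraph_adj.2 ⟨hC hu, hv, huv, e, Finset.mem_inter.2 ⟨hue, hve⟩⟩)
  rw [hall]
  exact even_ncard_negPlaqs_dualPlaq_edge x e

/-- **Lemma 2.3 (Decomposition into vortices).**
For any spin configuration `σ` on the edges of `ℤ⁴`, the set of negative plaquettes of `σ`
is a disjoint union of vortices: it can be partitioned into pairwise disjoint nonempty
surfaces, each of whose dual surfaces is closed and connected. -/
theorem negative_plaquettes_decompose_into_vortices (x : Edge → Bool) :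
    ∃ 𝒱 : Set (Set Plaq),
      (∀ S ∈ 𝒱, IsVortex x S) ∧
      (∀ S ∈ 𝒱, ∀ T ∈ 𝒱, S ≠ T → Disjoint S T) ∧
      ⋃₀ 𝒱 = negPlaqs x := by
  refine ⟨ConnectedComponent.supp ''
    {C : (vortexGraph x).ConnectedComponent | C.supp ⊆ negPlaqs x}, ?_, ?_, ?_⟩
  · rintro _ ⟨C, hC, rfl⟩
    exact ⟨C.nonempty_supp, hC, surfClosed_dualSurf_supp C hC, surfConnected_dualSurf_supp C⟩
  · rintro _ ⟨C, -, rfl⟩ _ ⟨D, -, rfl⟩ hCD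
    exact (vortexGraph x).pairwise_disjoint_supp_connectedComponent fun h => hCD (h ▸ rfl)
  · refine subset_antisymm (Set.sUnion_subset ?_) fun p hp => ?_
    · rintro _ ⟨C, hC, rfl⟩
      exact hC
    · refine ⟨((vortexGraph x).connectedComponentMk p).supp,
        ⟨_, fun q hq => ?_, rfl⟩, rfl⟩
      exact mem_negPlaqs_of_reachable hp (ConnectedComponent.exact hq).symm
end

section
/- Discrete Poincaré lemma: Take any 1 ≤ k ≤ n, an abelian group G, and a cube B in ℤⁿ. Then (i) the exterior derivative d maps the set of G-valued (k−1)-forms on B surjectively onto the set of closed G-valued k-forms on B; (ii) if G is finite and m is the number of closed G-valued (k−1)-forms on B, then every closed G-valued k-form on B has exactly m preimages under d; (iii) if 1 ≤ k ≤ n−1 and f is a closed G-valued k-form on B that vanishes on all k-cells on the boundary of B, then there is a G-valued (k−1)-form h on B that vanishes on all (k−1)-cells on the boundary of B and satisfies dh = f. -/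
/-!
Discrete exterior calculus on the cell complex of `ℤⁿ`.

A positively oriented `k`-cell `dx_{i₁} ∧ ⋯ ∧ dx_{i_k}` (with `i₁ < ⋯ < i_k`) at the point
`x ∈ ℤⁿ` is encoded as the pair `(x, S)` with `S = {i₁, …, i_k}`, so its dimension is `S.card`.
A `G`-valued `k`-form is a `G`-valued function on cells; only its values on cells of
dimension `k` are relevant (a single function type conveniently encodes forms of all
degrees; every statement below is made on cells of the appropriate dimension).

The dual lattice `*ℤⁿ` is identified with `ℤⁿ`: the dual vertex `y = z + (1/2, …, 1/2)`
(the center of the unit `n`-cell with base vertex `z`) is identified with the integer point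
`z`, and the edges of the dual lattice at `y` point in the *negative* coordinate directions;
the dual cell `dy_{j₁} ∧ ⋯ ∧ dy_{j_m}` at `y` is encoded as the pair `(z, {j₁, …, j_m})`.
-/

/-- A cell of `ℤⁿ` (or of the dual lattice `*ℤⁿ`): a base point and a set of spanning
directions. -/
abbrev GCell (n : ℕ) := (Fin n → ℤ) × Finset (Fin n)

/-- The unit vector `e_i`. -/
def unitV (n : ℕ) (i : Fin n) : Fin n → ℤ := fun m => if m = i then 1 else 0

section Forms

variable {n : ℕ} {G : Type*} [AddCommGroup G]

/-- The discrete exterior derivative on `ℤⁿ`: for a `k`-form `f`,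
`(df)_{i₁⋯i_{k+1}}(x) = ∑_j (−1)^{j−1} ∂_{i_j} f_{i₁⋯î_j⋯i_{k+1}}(x)`, where
`∂_i h(x) = h(x + e_i) − h(x)`. -/
def dF (f : GCell n → G) : GCell n → G := fun c =>
  ∑ i ∈ c.2.attach,
    ((-1 : ℤ) ^ (c.2.filter (fun j => j < i.1)).card) •
      (f (c.1 + unitV n i.1, c.2.erase i.1) - f (c.1, c.2.erase i.1))

/-- The exterior derivative on the dual lattice: the same formula as `dF` but with `∂_i`
replaced by `∂̄_i`, where `∂̄_i h(y) = h(y) − h(y − e_i)`. -/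
def dFDual (f : GCell n → G) : GCell n → G := fun c =>
  ∑ i ∈ c.2.attach,
    ((-1 : ℤ) ^ (c.2.filter (fun j => j < i.1)).card) •
      (f (c.1, c.2.erase i.1) - f (c.1 - unitV n i.1, c.2.erase i.1))

/-- The discrete coderivative on `ℤⁿ`: for a `k`-form `f`,
`δf(x) = ∑_{i₁<⋯<i_k} ∑_l (−1)^l ∂̄_{i_l} f_{i₁⋯i_k}(x) dx_{i₁} ∧ ⋯ ∧ dx̂_{i_l} ∧ ⋯ ∧ dx_{i_k}`,
where `∂̄_i h(x) = h(x) − h(x − e_i)`  (and `δf = 0` for `0`-forms). -/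
def codiff (f : GCell n → G) : GCell n → G := fun c =>
  ∑ i ∈ (c.2ᶜ).attach,
    ((-1 : ℤ) ^ ((c.2.filter (fun j => j < i.1)).card + 1)) •
      (f (c.1, insert i.1 c.2) - f (c.1 - unitV n i.1, insert i.1 c.2))

/-- The sign of the permutation `(i₁, …, i_k, j₁, …, j_{n−k})`, where `i₁ < ⋯ < i_k` lists
`S` and `j₁ < ⋯ < j_{n−k}` lists its complement. -/
def hodgeSign (S : Finset (Fin n)) : ℤ :=
  (-1) ^ (∑ i ∈ S, ((Sᶜ : Finset (Fin n)).filter (fun j => j < i)).card)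

/-- The Hodge dual of a `k`-form `f` on `ℤⁿ`: the `(n−k)`-form `*f` on the dual lattice
determined by `*f(*c) = f(c)`, i.e. `*f(z, T) = s · f(z, Tᶜ)` with `s` the sign of the
permutation `(Tᶜ, T)`. -/
def hodgeToDual (f : GCell n → G) : GCell n → G := fun c =>
  hodgeSign (c.2ᶜ) • f (c.1, c.2ᶜ)

/-- The Hodge dual of a form `g` on the dual lattice `*ℤⁿ`: the form `*g` on `ℤⁿ`
determined by `*g(*c') = g(c')`, i.e. `*g(x, S) = (−1)^{|S|·|Sᶜ|} s · g(x, Sᶜ)` with `s`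
the sign of the permutation `(S, Sᶜ)`. -/
def hodgeToPrimal (g : GCell n → G) : GCell n → G := fun c =>
  ((-1 : ℤ) ^ (c.2.card * (c.2ᶜ : Finset (Fin n)).card) * hodgeSign c.2) • g (c.1, c.2ᶜ)

end Forms

section Cube

variable {n : ℕ}

/-- Membership of a point in the cube `[a₁, a₁+w] × ⋯ × [a_n, a_n+w] ∩ ℤⁿ`. -/
def InCube (a : Fin n → ℤ) (w : ℕ) (v : Fin n → ℤ) : Prop :=
  ∀ m, a m ≤ v m ∧ v m ≤ a m + w

/-- `v` is a vertex of the cell `c` (that is, `v = x + ∑_{i ∈ T} e_i` for some `T ⊆ S`). -/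
def CellVert (c : GCell n) (v : Fin n → ℤ) : Prop :=
  ∃ T ⊆ c.2, v = fun m => c.1 m + (if m ∈ T then 1 else 0)

/-- The cell `c` is in the cube: all its vertices are in the cube. -/
def CellIn (a : Fin n → ℤ) (w : ℕ) (c : GCell n) : Prop :=
  ∀ m, a m ≤ c.1 m ∧ c.1 m + (if m ∈ c.2 then 1 else 0) ≤ a m + w

/-- A boundary vertex of the cube. -/
def BdryVtx (a : Fin n → ℤ) (w : ℕ) (v : Fin n → ℤ) : Prop :=
  InCube a w v ∧ ∃ m, v m = a m ∨ v m = a m + w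

/-- The cell `c` is on the boundary of the cube: all its vertices are boundary vertices. -/
def CellOnBdry (a : Fin n → ℤ) (w : ℕ) (c : GCell n) : Prop :=
  CellIn a w c ∧ ∀ v, CellVert c v → BdryVtx a w v

/-- The cell `c` is outside the cube: some vertex of `c` is outside the cube. -/
def CellOutside (a : Fin n → ℤ) (w : ℕ) (c : GCell n) : Prop :=
  ∃ v, CellVert c v ∧ ¬ InCube a w v

lemma cellIn_iff {a : Fin n → ℤ} {w : ℕ} {c : GCell n} :
    CellIn a w c ↔ ∀ v, CellVert c v → InCube a w v := by
  constructor
  · rintro h v ⟨T, hT, rfl⟩ m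
    obtain ⟨h1, h2⟩ := h m
    by_cases hm : m ∈ T
    · have hmS : m ∈ c.2 := hT hm
      simp only [hm, if_pos, hmS] at *
      omega
    · simp only [hm, if_neg, not_false_iff, add_zero]
      constructor
      · exact h1
      · split at h2 <;> omega
  · intro h m
    have h0 := h c.1 ⟨∅, Finset.empty_subset _, by funext m; simp⟩
    constructor
    · exact (h0 m).1
    · by_cases hm : m ∈ c.2
      · have := (h (fun m' => c.1 m' + (if m' ∈ ({m} : Finset (Fin n)) then 1 else 0))
          ⟨{m}, by simpa using hm, rfl⟩) m
        simpa [hm] using this.2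
      · have := h0 m
        simpa [hm] using this.2

lemma cellIn_erase {a : Fin n → ℤ} {w : ℕ} {c : GCell n} (h : CellIn a w c) (i : Fin n) :
    CellIn a w (c.1, c.2.erase i) := by
  intro m
  obtain ⟨h1, h2⟩ := h m
  refine ⟨h1, ?_⟩
  by_cases hm : m ∈ c.2.erase i
  · simpa [hm, Finset.mem_of_mem_erase hm] using h2
  · simp only [hm, if_neg, not_false_iff, add_zero]
    split at h2 <;> omega

lemma cellIn_shift_erase {a : Fin n → ℤ} {w : ℕ} {c : GCell n} (h : CellIn a w c)
    {i : Fin n} (hi : i ∈ c.2) :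
    CellIn a w (c.1 + unitV n i, c.2.erase i) := by
  intro m
  obtain ⟨h1, h2⟩ := h m
  simp only [Pi.add_apply, unitV]
  by_cases hmi : m = i
  · subst hmi
    have hmm : m ∉ c.2.erase m := by simp
    simp only [if_pos rfl, hmm, if_neg, not_false_iff, add_zero]
    simp only [hi, if_pos] at h2
    omega
  · simp only [hmi, if_neg, not_false_iff, add_zero]
    refine ⟨h1, ?_⟩
    by_cases hm : m ∈ c.2.erase i
    · simpa [hm, Finset.mem_of_mem_erase hm] using h2
    · simp only [hm, if_neg, not_false_iff, add_zero]
      split at h2 <;> omega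

variable {G : Type*} [AddCommGroup G]

/-- A `G`-valued form on the cube with corner `a` and width `w`: a function on the cells of
the cube (of all dimensions; only the values in one dimension are relevant at a time). -/
abbrev FormC (a : Fin n → ℤ) (w : ℕ) (G : Type*) := {c : GCell n // CellIn a w c} → G

/-- The exterior derivative of a form on a cube, given by the same formula as `dF`. -/
def dFC (a : Fin n → ℤ) (w : ℕ) (f : FormC a w G) : FormC a w G := fun c =>
  ∑ i ∈ c.1.2.attach,
    ((-1 : ℤ) ^ (c.1.2.filter (fun j => j < i.1)).card) •
      (f ⟨(c.1.1 + unitV n i.1, c.1.2.erase i.1), cellIn_shift_erase c.2 i.2⟩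
        - f ⟨(c.1.1, c.1.2.erase i.1), cellIn_erase c.2 i.1⟩)

end Cube

section DegreeForms

variable {n : ℕ} {G : Type*} [AddCommGroup G]

/-- A `G`-valued `k`-form on the cube with corner `a` and width `w`: a function on the
positively oriented `k`-cells in the cube. -/
abbrev FormB (a : Fin n → ℤ) (w : ℕ) (k : ℕ) (G : Type*) :=
  {c : GCell n // CellIn a w c ∧ c.2.card = k} → G

/-- The exterior derivative of a `k`-form on a cube, as a `(k+1)`-form on the cube. -/
def dB {a : Fin n → ℤ} {w : ℕ} {k : ℕ} (f : FormB a w k G) : FormB a w (k + 1) G := fun c =>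
  ∑ i ∈ c.1.2.attach,
    ((-1 : ℤ) ^ (c.1.2.filter (fun j => j < i.1)).card) •
      (f ⟨(c.1.1 + unitV n i.1, c.1.2.erase i.1),
          ⟨cellIn_shift_erase c.2.1 i.2, by simp [Finset.card_erase_of_mem i.2, c.2.2]⟩⟩
        - f ⟨(c.1.1, c.1.2.erase i.1),
          ⟨cellIn_erase c.2.1 i.1, by simp [Finset.card_erase_of_mem i.2, c.2.2]⟩⟩)

open scoped Classical in
/-- The extension of a `k`-form on a cube to a form on all of `ℤⁿ`, by zero outside. -/
noncomputable def extZ (a : Fin n → ℤ) (w : ℕ) (k : ℕ) (f : FormB a w k G) :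
    GCell n → G := fun c =>
  if h : CellIn a w c ∧ c.2.card = k then f ⟨c, h⟩ else 0

end DegreeForms

section DualCube

variable {n : ℕ}

/-!
In the integer coordinates for the dual lattice described above, the dual cube `*B` of the
cube `B` with corner `a` and width `w` (whose dual vertices are the centers of the unit
`n`-cells meeting `B`, i.e. `*B = [a−1/2, a+w+1/2]ⁿ ∩ *ℤⁿ`) has vertex set `[a−1, a+w]ⁿ`;
a dual cell `(z, T)` has vertices `z − ∑_{i∈T'} e_i` for `T' ⊆ T`.
-/

/-- Membership of a dual-lattice point (in integer coordinates) in the dual cube `*B`. -/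
def InDCube (a : Fin n → ℤ) (w : ℕ) (v : Fin n → ℤ) : Prop :=
  ∀ m, a m - 1 ≤ v m ∧ v m ≤ a m + w

/-- `v` is a vertex of the dual cell `c` (i.e. `v = z − ∑_{i ∈ T'} e_i` for some `T' ⊆ T`). -/
def DCellVert (c : GCell n) (v : Fin n → ℤ) : Prop :=
  ∃ T ⊆ c.2, v = fun m => c.1 m - (if m ∈ T then 1 else 0)

/-- The dual cell `c` is in the dual cube `*B`: all its vertices are in `*B`. -/
def DCellIn (a : Fin n → ℤ) (w : ℕ) (c : GCell n) : Prop :=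
  ∀ m, a m - 1 ≤ c.1 m - (if m ∈ c.2 then 1 else 0) ∧ c.1 m ≤ a m + w

/-- A boundary vertex of the dual cube `*B`. -/
def DBdryVtx (a : Fin n → ℤ) (w : ℕ) (v : Fin n → ℤ) : Prop :=
  InDCube a w v ∧ ∃ m, v m = a m - 1 ∨ v m = a m + w

/-- The dual cell `c` is on the boundary of `*B`: all its vertices are boundary vertices. -/
def DCellOnBdry (a : Fin n → ℤ) (w : ℕ) (c : GCell n) : Prop :=
  DCellIn a w c ∧ ∀ v, DCellVert c v → DBdryVtx a w v

/-- The dual cell `c` is outside `*B`: some vertex of `c` is outside `*B`. -/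
def DCellOutside (a : Fin n → ℤ) (w : ℕ) (c : GCell n) : Prop :=
  ∃ v, DCellVert c v ∧ ¬ InDCube a w v

/-- The Hodge dual of the cell `(x, S)`, as an unoriented cell of the dual lattice:
the `(n−k)`-cell `(x, Sᶜ)`. -/
def dualCell (c : GCell n) : GCell n := (c.1, (c.2ᶜ : Finset (Fin n)))

lemma dCellIn_erase {a : Fin n → ℤ} {w : ℕ} {c : GCell n} (h : DCellIn a w c) (i : Fin n) :
    DCellIn a w (c.1, c.2.erase i) := by
  intro m
  obtain ⟨h1, h2⟩ := h m
  refine ⟨?_, h2⟩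
  by_cases hm : m ∈ c.2.erase i
  · simpa [hm, Finset.mem_of_mem_erase hm] using h1
  · simp only [hm, if_neg, not_false_iff, sub_zero]
    split at h1 <;> omega

lemma dCellIn_shift_erase {a : Fin n → ℤ} {w : ℕ} {c : GCell n} (h : DCellIn a w c)
    {i : Fin n} (hi : i ∈ c.2) :
    DCellIn a w (c.1 - unitV n i, c.2.erase i) := by
  intro m
  obtain ⟨h1, h2⟩ := h m
  simp only [Pi.sub_apply, unitV]
  by_cases hmi : m = i
  · subst hmi
    have hmm : m ∉ c.2.erase m := by simp
    simp only [if_pos rfl, hmm, if_neg, not_false_iff, sub_zero]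
    simp only [hi, if_pos] at h1
    omega
  · simp only [hmi, if_neg, not_false_iff, sub_zero]
    refine ⟨?_, h2⟩
    by_cases hm : m ∈ c.2.erase i
    · simpa [hm, Finset.mem_of_mem_erase hm] using h1
    · simp only [hm, if_neg, not_false_iff, sub_zero]
      split at h1 <;> omega

variable {G : Type*} [AddCommGroup G]

/-- A `G`-valued `j`-form on the dual cube `*B`: a function on the `j`-cells of the dual
lattice lying in `*B`. -/
abbrev FormDB (a : Fin n → ℤ) (w : ℕ) (j : ℕ) (G : Type*) :=
  {c : GCell n // DCellIn a w c ∧ c.2.card = j} → G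

/-- The exterior derivative of a `j`-form on the dual cube `*B`, as a `(j+1)`-form on `*B`
(the same formula as `dF`, with `∂_i` replaced by `∂̄_i`). -/
def dDB {a : Fin n → ℤ} {w : ℕ} {j : ℕ} (g : FormDB a w j G) : FormDB a w (j + 1) G :=
  fun c =>
    ∑ i ∈ c.1.2.attach,
      ((-1 : ℤ) ^ (c.1.2.filter (fun j' => j' < i.1)).card) •
        (g ⟨(c.1.1, c.1.2.erase i.1),
            ⟨dCellIn_erase c.2.1 i.1, by simp [Finset.card_erase_of_mem i.2, c.2.2]⟩⟩
          - g ⟨(c.1.1 - unitV n i.1, c.1.2.erase i.1),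
            ⟨dCellIn_shift_erase c.2.1 i.2, by simp [Finset.card_erase_of_mem i.2, c.2.2]⟩⟩)

open scoped Classical in
/-- The Hodge dual `*f`, a `j`-form on the dual cube `*B`, of a `k`-form `f` on the cube
`B`: it is determined by `*f(*c) = f(c)` on the internal cells of `*B` (equivalently
`*f(z,T) = s·f(z,Tᶜ)` with `s` the sign of the permutation `(Tᶜ, T)`), and is zero on the
boundary cells of `*B`. -/
noncomputable def starB (a : Fin n → ℤ) (w : ℕ) (k : ℕ) {j : ℕ} (f : FormB a w k G) :
    FormDB a w j G := fun c =>
  if DCellOnBdry a w c.1 then 0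
  else hodgeSign ((c.1.2ᶜ : Finset (Fin n))) • extZ a w k f (c.1.1, (c.1.2ᶜ : Finset (Fin n)))

end DualCube

/-!
The key identity is the homotopy formula `d K_m + K_m d = 1 - P_m` on the cube, where `K_m`
sums a form along the direction `m` starting from the face `x_m = a_m`, and `P_m` pulls back
along the projection onto that face. Adding the directions one at a time, a form closed on the
face of the cube spanned by `M ∪ {m}` is `d K_m φ` plus the pull-back of a form closed on the
face spanned by `M`, and induction applies.

For forms vanishing on the boundary, `P_m φ = 0`, and `K_m φ` itself vanishes on the boundary
except on the top face `x_m = a_m + w`, where it equals the sums of `φ` over whole fibres in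
direction `m`. These sums form a closed form on the face spanned by `M`, vanishing on its boundary,
so by induction they are `d u`; subtracting `d` of the extension of `u` to the top face repairs
`K_m φ`. Since `u` is only controlled below the top degree of the smaller face, the relative
statement stops below the top degree, where the relative cohomology of the cube sits.
-/

open Finset Function

section Signs

variable {n : ℕ}

/-- The sign acquired by moving `dx_i` to its place in `dx_S`. -/
def cellSign (S : Finset (Fin n)) (i : Fin n) : ℤ := (-1) ^ #{j ∈ S | j < i}

lemma card_filter_lt_erase_add {S : Finset (Fin n)} {i : Fin n} (hi : i ∈ S) (j : Fin n) :
    #{x ∈ S.erase i | x < j} + (if i < j then 1 else 0) = #{x ∈ S | x < j} := by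
  rw [filter_erase]
  split_ifs with h
  · exact card_erase_add_one (mem_filter.2 ⟨hi, h⟩)
  · rw [erase_eq_of_notMem fun h' : i ∈ {x ∈ S | x < j} => h (mem_filter.1 h').2, add_zero]

lemma card_filter_lt_insert {S : Finset (Fin n)} {m : Fin n} (hm : m ∉ S) (i : Fin n) :
    #{x ∈ insert m S | x < i} = #{x ∈ S | x < i} + (if m < i then 1 else 0) := by
  rw [filter_insert]
  split_ifs
  · exact card_insert_of_notMem fun h' => hm (mem_filter.1 h').1
  · rfl

lemma cellSign_erase_self (S : Finset (Fin n)) (i : Fin n) :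
    cellSign (S.erase i) i = cellSign S i := by
  rw [cellSign, cellSign, filter_erase, erase_eq_of_notMem (by simp)]

lemma cellSign_insert_self (S : Finset (Fin n)) (i : Fin n) :
    cellSign (insert i S) i = cellSign S i := by
  rw [cellSign, cellSign, filter_insert, if_neg (lt_irrefl i)]

lemma cellSign_mul_self (S : Finset (Fin n)) (i : Fin n) : cellSign S i * cellSign S i = 1 := by
  rw [cellSign, ← pow_add]
  exact Even.neg_one_pow ⟨_, rfl⟩

lemma neg_one_pow_eq_neg_of_succ {p q : ℕ} (h : p = q + 1 ∨ q = p + 1) :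
    (-1 : ℤ) ^ p = -(-1 : ℤ) ^ q := by
  rcases h with rfl | rfl <;> ring

lemma cellSign_mul_cellSign_insert {S : Finset (Fin n)} {i m : Fin n} (hi : i ∈ S) (hm : m ∉ S) :
    cellSign S m * cellSign (insert m S) i = -(cellSign S i * cellSign (S.erase i) m) := by
  have h := card_filter_lt_erase_add hi m
  rw [cellSign, cellSign, cellSign, cellSign, card_filter_lt_insert hm i, ← pow_add, ← pow_add]
  apply neg_one_pow_eq_neg_of_succ
  rcases lt_or_gt_of_ne (ne_of_mem_of_not_mem hi hm) with h' | h' <;>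
    simp only [h', if_true, asymm h', if_false] at h ⊢ <;> omega

lemma cellSign_mul_cellSign_erase {S : Finset (Fin n)} {i j : Fin n} (hi : i ∈ S) (hj : j ∈ S)
    (hij : i ≠ j) :
    cellSign S i * cellSign (S.erase i) j = -(cellSign S j * cellSign (S.erase j) i) := by
  have h₁ := card_filter_lt_erase_add hi j
  have h₂ := card_filter_lt_erase_add hj i
  rw [cellSign, cellSign, cellSign, cellSign, ← pow_add, ← pow_add]
  apply neg_one_pow_eq_neg_of_succ
  rcases lt_or_gt_of_ne hij with h | h <;>
    simp only [h, if_true, asymm h, if_false] at h₁ h₂ <;> omega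

end Signs

section UnitVectors

variable {n : ℕ}

@[simp] lemma unitV_apply_self (i : Fin n) : unitV n i i = 1 := if_pos rfl

lemma unitV_apply_of_ne {i j : Fin n} (h : i ≠ j) : unitV n i j = 0 := if_neg h.symm

lemma update_add_unitV_of_ne (x : Fin n → ℤ) {i m : Fin n} (h : i ≠ m) (t : ℤ) :
    update (x + unitV n i) m t = update x m t + unitV n i := by
  ext j
  rcases eq_or_ne j m with rfl | hj
  · simp [unitV_apply_of_ne h]
  · simp [hj]

lemma update_add_unitV_self (x : Fin n → ℤ) (m : Fin n) (t : ℤ) :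
    update (x + unitV n m) m t = update x m t := by
  ext j
  rcases eq_or_ne j m with rfl | hj
  · simp
  · simp [hj, unitV_apply_of_ne hj.symm]

lemma update_add_unitV (x : Fin n → ℤ) (m : Fin n) (t : ℤ) :
    update x m t + unitV n m = update x m (t + 1) := by
  ext j
  rcases eq_or_ne j m with rfl | hj
  · simp
  · simp [hj, unitV_apply_of_ne hj.symm]

end UnitVectors

lemma sum_Ico_int_succ_top {M : Type*} [AddCommMonoid M] {a b : ℤ} (hab : a ≤ b) (f : ℤ → M) :
    ∑ t ∈ Ico a (b + 1), f t = ∑ t ∈ Ico a b, f t + f b := by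
  rw [Ico_add_one_right_eq_Icc, ← Ico_insert_right hab, sum_insert right_notMem_Ico, add_comm]

lemma sum_Ico_int_sub {M : Type*} [AddCommGroup M] {a b : ℤ} (hab : a ≤ b) (f : ℤ → M) :
    ∑ t ∈ Ico a b, (f (t + 1) - f t) = f b - f a := by
  induction b, hab using Int.leInduction with
  | base => simp
  | succ b hab ih => rw [sum_Ico_int_succ_top hab, ih]; abel

section ExteriorDerivative

variable {n : ℕ} {G : Type*} [AddCommGroup G]

lemma dF_apply (φ : GCell n → G) (x : Fin n → ℤ) (S : Finset (Fin n)) :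
    dF φ (x, S) = ∑ i ∈ S, cellSign S i • (φ (x + unitV n i, S.erase i) - φ (x, S.erase i)) :=
  sum_attach S fun i => cellSign S i • (φ (x + unitV n i, S.erase i) - φ (x, S.erase i))

lemma dF_add (φ ψ : GCell n → G) : dF (φ + ψ) = dF φ + dF ψ := by
  ext ⟨x, S⟩
  simp only [Pi.add_apply, dF_apply, add_sub_add_comm, smul_add, sum_add_distrib]

lemma dF_sub (φ ψ : GCell n → G) : dF (φ - ψ) = dF φ - dF ψ := by
  ext ⟨x, S⟩
  simp only [Pi.sub_apply, dF_apply, sub_sub_sub_comm, smul_sub, sum_sub_distrib]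

lemma dF_dF (φ : GCell n → G) : dF (dF φ) = 0 := by
  ext ⟨x, S⟩
  set X : Fin n → Fin n → G := fun i j =>
    (φ (x + unitV n i + unitV n j, (S.erase i).erase j) + φ (x, (S.erase i).erase j))
      - (φ (x + unitV n i, (S.erase i).erase j) + φ (x + unitV n j, (S.erase i).erase j))
  have hX : ∀ i j, X i j = X j i := fun i j => by
    simp only [X, erase_right_comm, add_right_comm x]
    abel
  have expand : ∀ i ∈ S, cellSign S i • (dF φ (x + unitV n i, S.erase i) - dF φ (x, S.erase i))
      = ∑ j ∈ S.erase i, (cellSign S i * cellSign (S.erase i) j) • X i j := fun i _ => by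
    rw [dF_apply, dF_apply, ← sum_sub_distrib, smul_sum]
    refine sum_congr rfl fun j _ => ?_
    rw [← smul_sub, smul_smul]
    congr 1
    simp only [X]
    abel
  rw [dF_apply, sum_congr rfl expand, sum_sigma', Pi.zero_apply]
  -- the terms indexed by `(i, j)` and `(j, i)` cancel
  refine sum_involution (fun p _ => ⟨p.2, p.1⟩) (fun p hp => ?_) (fun p hp _ h => ?_)
    (fun p hp => ?_) (fun _ _ => rfl)
  · simp only [mem_sigma, mem_erase] at hp
    rw [cellSign_mul_cellSign_erase hp.1 hp.2.2 (Ne.symm hp.2.1), neg_smul, hX,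
      neg_add_cancel]
  · simp only [mem_sigma, mem_erase] at hp
    exact hp.2.1 (congrArg Sigma.fst h)
  · simp only [mem_sigma, mem_erase] at hp ⊢
    exact ⟨hp.2.2, Ne.symm hp.2.1, hp.1⟩

lemma dF_comp_update (φ : GCell n → G) {m : Fin n} (s : ℤ) (x : Fin n → ℤ)
    {S : Finset (Fin n)} (hm : m ∉ S) :
    dF (fun c => φ (update c.1 m s, c.2)) (x, S) = dF φ (update x m s, S) := by
  rw [dF_apply, dF_apply]
  refine sum_congr rfl fun i hi => ?_
  rw [update_add_unitV_of_ne x (ne_of_mem_of_not_mem hi hm)]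

end ExteriorDerivative

section HomotopyOperator

variable {n : ℕ} {G : Type*} [AddCommGroup G] (a : Fin n → ℤ) (m : Fin n)

/-- The discrete analogue of `∫_{a_m}^{x_m} ι_{∂_m} φ`: contract with `dx_m` and sum along the
direction `m` from the face `x_m = a_m`. -/
noncomputable def homotopyOp (φ : GCell n → G) : GCell n → G := fun c =>
  if m ∈ c.2 then 0 else
    cellSign c.2 m • ∑ t ∈ Ico (a m) (c.1 m), φ (update c.1 m t, insert m c.2)

/-- For `θ = 1` this is the pull-back of `u` along the projection onto the face `x_m = a_m`. -/
def extendFromBase (θ : ℤ → ℤ) (u : GCell n → G) : GCell n → G := fun c =>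
  if m ∈ c.2 then 0 else θ (c.1 m) • u (update c.1 m (a m), c.2)

variable {a m}

lemma homotopyOp_of_mem (φ : GCell n → G) {c : GCell n} (hm : m ∈ c.2) :
    homotopyOp a m φ c = 0 := if_pos hm

lemma homotopyOp_of_notMem (φ : GCell n → G) (x : Fin n → ℤ) {S : Finset (Fin n)}
    (hm : m ∉ S) :
    homotopyOp a m φ (x, S) =
      cellSign S m • ∑ t ∈ Ico (a m) (x m), φ (update x m t, insert m S) := if_neg hm

lemma homotopyOp_eq_zero {φ : GCell n → G} {x : Fin n → ℤ} {S : Finset (Fin n)}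
    (h : ∀ t, a m ≤ t → t < x m → φ (update x m t, insert m S) = 0) :
    homotopyOp a m φ (x, S) = 0 := by
  by_cases hm : m ∈ S
  · exact homotopyOp_of_mem φ hm
  · rw [homotopyOp_of_notMem φ x hm, sum_eq_zero fun t ht => h t (mem_Ico.1 ht).1
      (mem_Ico.1 ht).2, smul_zero]

lemma extendFromBase_of_mem (θ : ℤ → ℤ) (u : GCell n → G) {c : GCell n} (hm : m ∈ c.2) :
    extendFromBase a m θ u c = 0 := if_pos hm

lemma extendFromBase_of_notMem (θ : ℤ → ℤ) (u : GCell n → G) (x : Fin n → ℤ)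
    {S : Finset (Fin n)} (hm : m ∉ S) :
    extendFromBase a m θ u (x, S) = θ (x m) • u (update x m (a m), S) := if_neg hm

lemma dF_extendFromBase_of_mem (θ : ℤ → ℤ) (u : GCell n → G) (x : Fin n → ℤ)
    {S : Finset (Fin n)} (hm : m ∈ S) :
    dF (extendFromBase a m θ u) (x, S) =
      (cellSign S m * (θ (x m + 1) - θ (x m))) • u (update x m (a m), S.erase m) := by
  rw [dF_apply, sum_eq_single_of_mem m hm fun i _ hi => by
      rw [extendFromBase_of_mem θ u (mem_erase.2 ⟨Ne.symm hi, hm⟩),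
        extendFromBase_of_mem θ u (mem_erase.2 ⟨Ne.symm hi, hm⟩), sub_zero, smul_zero],
    extendFromBase_of_notMem θ u _ (notMem_erase m S),
    extendFromBase_of_notMem θ u _ (notMem_erase m S), update_add_unitV_self, Pi.add_apply,
    unitV_apply_self, ← sub_smul, smul_smul]

lemma dF_extendFromBase_of_notMem (θ : ℤ → ℤ) (u : GCell n → G) (x : Fin n → ℤ)
    {S : Finset (Fin n)} (hm : m ∉ S) :
    dF (extendFromBase a m θ u) (x, S) = θ (x m) • dF u (update x m (a m), S) := by
  rw [dF_apply, dF_apply, smul_sum]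
  refine sum_congr rfl fun i hi => ?_
  have him : i ≠ m := ne_of_mem_of_not_mem hi hm
  have hmi : m ∉ S.erase i := fun h => hm (mem_of_mem_erase h)
  rw [extendFromBase_of_notMem θ u _ hmi, extendFromBase_of_notMem θ u _ hmi, Pi.add_apply,
    unitV_apply_of_ne him, add_zero, update_add_unitV_of_ne x him, ← smul_sub, smul_comm]

lemma dF_homotopyOp_of_mem (φ : GCell n → G) {x : Fin n → ℤ} {S : Finset (Fin n)}
    (hm : m ∈ S) (hx : a m ≤ x m) :
    dF (homotopyOp a m φ) (x, S) = φ (x, S) := by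
  rw [dF_apply, sum_eq_single_of_mem m hm fun i _ hi => by
      rw [homotopyOp_of_mem φ (mem_erase.2 ⟨Ne.symm hi, hm⟩),
        homotopyOp_of_mem φ (mem_erase.2 ⟨Ne.symm hi, hm⟩), sub_zero, smul_zero],
    homotopyOp_of_notMem φ _ (notMem_erase m S), homotopyOp_of_notMem φ _ (notMem_erase m S),
    insert_erase hm, ← smul_sub, smul_smul, cellSign_erase_self, cellSign_mul_self, one_smul]
  simp only [Pi.add_apply, unitV_apply_self, update_add_unitV_self]
  rw [sum_Ico_int_succ_top hx, add_sub_cancel_left, update_eq_self]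

lemma dF_homotopyOp_of_notMem (φ : GCell n → G) (x : Fin n → ℤ) {S : Finset (Fin n)}
    (hm : m ∉ S) :
    dF (homotopyOp a m φ) (x, S) = ∑ i ∈ S, (cellSign S i * cellSign (S.erase i) m) •
      ∑ t ∈ Ico (a m) (x m), (φ (update x m t + unitV n i, insert m (S.erase i))
        - φ (update x m t, insert m (S.erase i))) := by
  rw [dF_apply]
  refine sum_congr rfl fun i hi => ?_
  have him : i ≠ m := ne_of_mem_of_not_mem hi hm
  have hmi : m ∉ S.erase i := fun h => hm (mem_of_mem_erase h)
  rw [homotopyOp_of_notMem φ _ hmi, homotopyOp_of_notMem φ _ hmi, Pi.add_apply,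
    unitV_apply_of_ne him, add_zero, ← smul_sub, ← sum_sub_distrib, smul_smul]
  simp only [update_add_unitV_of_ne x him]

lemma cellSign_smul_dF_insert (φ : GCell n → G) (y : Fin n → ℤ) {S : Finset (Fin n)}
    (hm : m ∉ S) :
    cellSign S m • dF φ (y, insert m S) = (φ (y + unitV n m, S) - φ (y, S))
      - ∑ i ∈ S, (cellSign S i * cellSign (S.erase i) m) •
          (φ (y + unitV n i, insert m (S.erase i)) - φ (y, insert m (S.erase i))) := by
  rw [dF_apply, sum_insert hm, smul_add, erase_insert hm, cellSign_insert_self, smul_smul,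
    cellSign_mul_self, one_smul, smul_sum, sub_eq_add_neg (_ - _), ← sum_neg_distrib]
  congr 1
  refine sum_congr rfl fun i hi => ?_
  rw [erase_insert_of_ne (ne_of_mem_of_not_mem hi hm).symm, smul_smul,
    cellSign_mul_cellSign_insert hi hm, neg_smul]

lemma dF_homotopyOp_add_homotopyOp_dF (φ : GCell n → G) {x : Fin n → ℤ} {S : Finset (Fin n)}
    (hx : a m ≤ x m) :
    dF (homotopyOp a m φ) (x, S) + homotopyOp a m (dF φ) (x, S) =
      φ (x, S) - extendFromBase a m 1 φ (x, S) := by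
  by_cases hm : m ∈ S
  · rw [dF_homotopyOp_of_mem φ hm hx, homotopyOp_of_mem _ hm, extendFromBase_of_mem _ _ hm,
      add_zero, sub_zero]
  · rw [dF_homotopyOp_of_notMem φ x hm, homotopyOp_of_notMem _ x hm, smul_sum,
      extendFromBase_of_notMem _ _ x hm, Pi.one_apply, one_smul]
    simp only [cellSign_smul_dF_insert φ _ hm, update_add_unitV]
    rw [sum_sub_distrib, sum_Ico_int_sub hx fun t => φ (update x m t, S), update_eq_self,
      sum_comm]
    simp only [← smul_sum]
    abel

end HomotopyOperator

section Subcube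

variable {n : ℕ} {a : Fin n → ℤ} {w : ℕ}

lemma cellIn_update {x : Fin n → ℤ} {S : Finset (Fin n)} (h : CellIn a w (x, S)) {m : Fin n}
    (hm : m ∉ S) {t : ℤ} (ht₀ : a m ≤ t) (ht₁ : t ≤ a m + w) :
    CellIn a w (update x m t, S) := by
  intro j
  rcases eq_or_ne j m with rfl | hj
  · simpa [hm] using And.intro ht₀ ht₁
  · simpa [hj] using h j

lemma cellIn_update_insert {x : Fin n → ℤ} {S : Finset (Fin n)} (h : CellIn a w (x, S))
    {m : Fin n} {t : ℤ} (ht₀ : a m ≤ t) (ht₁ : t + 1 ≤ a m + w) :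
    CellIn a w (update x m t, insert m S) := by
  intro j
  rcases eq_or_ne j m with rfl | hj
  · simpa using And.intro ht₀ ht₁
  · simpa [hj] using h j

variable (a w) in
def InSubcube (M : Finset (Fin n)) (c : GCell n) : Prop :=
  CellIn a w c ∧ c.2 ⊆ M ∧ ∀ j ∉ M, c.1 j = a j

variable (a w) in
def OnSubcubeBoundary (M : Finset (Fin n)) (c : GCell n) : Prop :=
  ∃ j ∈ M, j ∉ c.2 ∧ (c.1 j = a j ∨ c.1 j = a j + w)

lemma inSubcube_univ {c : GCell n} : InSubcube a w univ c ↔ CellIn a w c :=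
  ⟨fun h => h.1, fun h => ⟨h, subset_univ _, fun j hj => absurd (mem_univ j) hj⟩⟩

namespace InSubcube

variable {M : Finset (Fin n)} {x : Fin n → ℤ} {S : Finset (Fin n)} {m : Fin n}

lemma mono {c : GCell n} (h : InSubcube a w M c) {M' : Finset (Fin n)} (hM : M ⊆ M') :
    InSubcube a w M' c :=
  ⟨h.1, h.2.1.trans hM, fun j hj => h.2.2 j fun hjM => hj (hM hjM)⟩

lemma erase (h : InSubcube a w M (x, S)) (i : Fin n) : InSubcube a w M (x, S.erase i) :=
  ⟨cellIn_erase h.1 i, (erase_subset i S).trans h.2.1, h.2.2⟩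

lemma update (h : InSubcube a w M (x, S)) (hmM : m ∈ M) (hm : m ∉ S) {t : ℤ}
    (ht₀ : a m ≤ t) (ht₁ : t ≤ a m + w) : InSubcube a w M (Function.update x m t, S) :=
  ⟨cellIn_update h.1 hm ht₀ ht₁, h.2.1, fun j hj =>
    (update_of_ne (ne_of_mem_of_not_mem hmM hj).symm ..).trans (h.2.2 j hj)⟩

lemma update_insert (h : InSubcube a w M (x, S)) (hmM : m ∈ M) {t : ℤ} (ht₀ : a m ≤ t)
    (ht₁ : t + 1 ≤ a m + w) : InSubcube a w M (Function.update x m t, insert m S) :=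
  ⟨cellIn_update_insert h.1 ht₀ ht₁, insert_subset hmM h.2.1, fun j hj =>
    (update_of_ne (ne_of_mem_of_not_mem hmM hj).symm ..).trans (h.2.2 j hj)⟩

lemma update_insert_of_lt (h : InSubcube a w M (x, S)) (hmM : m ∈ M) (hm : m ∉ S) {t : ℤ}
    (ht₀ : a m ≤ t) (ht₁ : t < x m) : InSubcube a w M (Function.update x m t, insert m S) :=
  h.update_insert hmM ht₀ (by have := (h.1 m).2; simp [hm] at this; omega)

lemma update_base (h : InSubcube a w (insert m M) (x, S)) (hm : m ∉ S) :
    InSubcube a w M (Function.update x m (a m), S) := by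
  refine ⟨cellIn_update h.1 hm le_rfl (by omega), fun j hj => ?_, fun j hj => ?_⟩
  · exact (mem_insert.1 (h.2.1 hj)).resolve_left (ne_of_mem_of_not_mem hj hm)
  · rcases eq_or_ne j m with rfl | hjm
    · exact update_self ..
    · exact (update_of_ne hjm ..).trans (h.2.2 j (by simp [hjm, hj]))

end InSubcube

end Subcube

section PoincareOnSubcubes

variable {n : ℕ} {G : Type*} [AddCommGroup G] {a : Fin n → ℤ} {w : ℕ} {M : Finset (Fin n)}
  {m : Fin n}

lemma homotopyOp_eq_zero_of_inSubcube {χ : GCell n → G}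
    (hχ : ∀ c, InSubcube a w M c → χ c = 0) (hmM : m ∈ M) {x : Fin n → ℤ}
    {S : Finset (Fin n)} (hc : InSubcube a w M (x, S)) : homotopyOp a m χ (x, S) = 0 := by
  by_cases hm : m ∈ S
  · exact homotopyOp_of_mem χ hm
  · exact homotopyOp_eq_zero fun t ht₀ ht₁ => hχ _ (hc.update_insert_of_lt hmM hm ht₀ ht₁)

variable (a w) in
theorem exists_dF_eq_on_subcube (M : Finset (Fin n)) (φ : GCell n → G)
    (hφ : ∀ c, InSubcube a w M c → dF φ c = 0) :
    ∃ ψ : GCell n → G, ∀ c, InSubcube a w M c → c.2.Nonempty → dF ψ c = φ c := by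
  induction M using Finset.induction_on generalizing φ with
  | empty => exact ⟨0, fun c hc hne => absurd (subset_empty.1 hc.2.1) hne.ne_empty⟩
  | insert m M hmM ih =>
    obtain ⟨u, hu⟩ := ih φ fun c hc => hφ c (hc.mono (subset_insert m M))
    refine ⟨homotopyOp a m φ + extendFromBase a m 1 u, ?_⟩
    rintro ⟨x, S⟩ hc hne
    have hK := dF_homotopyOp_add_homotopyOp_dF (x := x) (S := S) φ (hc.1 m).1
    rw [homotopyOp_eq_zero_of_inSubcube hφ (mem_insert_self m M) hc, add_zero] at hK
    rw [dF_add, Pi.add_apply, hK]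
    by_cases hm : m ∈ S
    · rw [extendFromBase_of_mem _ _ hm, dF_extendFromBase_of_mem _ _ _ hm]
      simp
    · rw [extendFromBase_of_notMem _ _ _ hm, dF_extendFromBase_of_notMem _ _ _ hm,
        hu _ (hc.update_base hm) hne]
      simp

lemma dF_homotopyOp_eq_self {φ : GCell n → G} (hφ : ∀ c, InSubcube a w M c → dF φ c = 0)
    (hφ₀ : ∀ c, InSubcube a w M c → OnSubcubeBoundary a w M c → φ c = 0) (hmM : m ∈ M)
    {x : Fin n → ℤ} {S : Finset (Fin n)} (hc : InSubcube a w M (x, S)) :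
    dF (homotopyOp a m φ) (x, S) = φ (x, S) := by
  have hK := dF_homotopyOp_add_homotopyOp_dF (x := x) (S := S) φ (hc.1 m).1
  rw [homotopyOp_eq_zero_of_inSubcube hφ hmM hc, add_zero] at hK
  rw [hK, sub_eq_self]
  by_cases hm : m ∈ S
  · exact extendFromBase_of_mem _ _ hm
  · rw [extendFromBase_of_notMem _ _ _ hm, Pi.one_apply, one_smul]
    exact hφ₀ _ (hc.update hmM hm le_rfl (by omega)) ⟨m, hmM, hm, Or.inl (update_self ..)⟩

variable (a w) in
/-- `K_m φ` on the face `x_m = a_m + w`, read off on the face `x_m = a_m`: the sums of `φ` over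
whole fibres in direction `m`. -/
noncomputable def fiberSum (m : Fin n) (φ : GCell n → G) : GCell n → G := fun c =>
  homotopyOp a m φ (update c.1 m (a m + w), c.2)

lemma dF_fiberSum (hmM : m ∉ M) {φ : GCell n → G}
    (hφ : ∀ c, InSubcube a w (insert m M) c → dF φ c = 0)
    (hφ₀ : ∀ c, InSubcube a w (insert m M) c → OnSubcubeBoundary a w (insert m M) c → φ c = 0)
    {c : GCell n} (hc : InSubcube a w M c) : dF (fiberSum a w m φ) c = 0 := by
  obtain ⟨y, S⟩ := c
  have hm : m ∉ S := fun h => hmM (hc.2.1 h)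
  have hc' : InSubcube a w (insert m M) (update y m (a m + w), S) :=
    (hc.mono (subset_insert m M)).update (mem_insert_self m M) hm (by omega) le_rfl
  unfold fiberSum
  rw [dF_comp_update _ _ _ hm,
    dF_homotopyOp_eq_self hφ hφ₀ (mem_insert_self m M) hc']
  exact hφ₀ _ hc' ⟨m, mem_insert_self m M, hm, Or.inr (update_self ..)⟩

lemma fiberSum_eq_zero (hmM : m ∉ M) {φ : GCell n → G}
    (hφ₀ : ∀ c, InSubcube a w (insert m M) c → OnSubcubeBoundary a w (insert m M) c → φ c = 0)
    {c : GCell n} (hc : InSubcube a w M c) (hb : OnSubcubeBoundary a w M c) :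
    fiberSum a w m φ c = 0 := by
  obtain ⟨y, S⟩ := c
  obtain ⟨j, hjM, hjS, hj⟩ := hb
  have hjm : j ≠ m := ne_of_mem_of_not_mem hjM hmM
  refine homotopyOp_eq_zero fun t ht₀ ht₁ => hφ₀ _ ?_ ⟨j, mem_insert_of_mem hjM, ?_, ?_⟩
  · rw [update_idem]
    exact (hc.mono (subset_insert m M)).update_insert (mem_insert_self m M) ht₀
      (by simp only [update_self] at ht₁; omega)
  · simp [hjm, hjS]
  · simpa [hjm] using hj

variable (a w) in
theorem exists_dF_eq_on_subcube_of_boundary (M : Finset (Fin n)) (φ : GCell n → G)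
    (hφ : ∀ c, InSubcube a w M c → dF φ c = 0)
    (hφ₀ : ∀ c, InSubcube a w M c → OnSubcubeBoundary a w M c → φ c = 0) :
    ∃ ψ : GCell n → G,
      (∀ c, InSubcube a w M c → OnSubcubeBoundary a w M c → #c.2 + 1 < #M → ψ c = 0) ∧
      ∀ c, InSubcube a w M c → #c.2 < #M → dF ψ c = φ c := by
  induction M using Finset.induction_on generalizing φ with
  | empty => exact ⟨0, fun _ _ _ h => absurd h (by simp), fun _ _ h => absurd h (by simp)⟩
  | insert m M hmM ih =>
    obtain ⟨u, hu₀, hu⟩ := ih (fiberSum a w m φ) (fun c hc => dF_fiberSum hmM hφ hφ₀ hc)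
      (fun c hc hb => fiberSum_eq_zero hmM hφ₀ hc hb)
    -- the correction term cancels `K_m φ` on the face `x_m = a_m + w`
    refine ⟨homotopyOp a m φ - dF (extendFromBase a m (Pi.single (a m + w) 1) u),
      ?_, fun c hc _ => ?_⟩
    · rintro ⟨x, S⟩ hc ⟨j, hjM, hjS, hj⟩ hcard
      dsimp only at hjS hj hcard
      rw [card_insert_of_notMem hmM, add_lt_add_iff_right] at hcard
      rw [Pi.sub_apply]
      by_cases hm : m ∈ S
      · have hjm : j ≠ m := ne_of_mem_of_not_mem hm hjS |>.symm
        rw [homotopyOp_of_mem _ hm, dF_extendFromBase_of_mem _ _ _ hm,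
          hu₀ _ ((hc.erase m).update_base (notMem_erase m S))
            ⟨j, (mem_insert.1 hjM).resolve_left hjm, fun h => hjS (mem_of_mem_erase h),
              by simpa [hjm] using hj⟩
            (by rw [card_erase_of_mem hm, Nat.sub_add_cancel (card_pos.2 ⟨m, hm⟩)]; exact hcard),
          smul_zero, sub_zero]
      · rw [dF_extendFromBase_of_notMem _ _ _ hm, hu _ (hc.update_base hm) hcard,
          fiberSum, update_idem]
        by_cases htop : x m = a m + w
        · rw [htop, Pi.single_eq_same, one_smul, ← htop, update_eq_self, sub_self]
        · rw [Pi.single_eq_of_ne htop, zero_smul, sub_zero]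
          refine homotopyOp_eq_zero fun t ht₀ ht₁ => ?_
          have hjm : j ≠ m := by
            rintro rfl
            omega
          exact hφ₀ _ (hc.update_insert_of_lt (mem_insert_self m M) hm ht₀ ht₁)
            ⟨j, hjM, by simp [hjm, hjS], by simpa [hjm] using hj⟩
    · rw [dF_sub, dF_dF, sub_zero]
      exact dF_homotopyOp_eq_self hφ hφ₀ (mem_insert_self m M) hc

end PoincareOnSubcubes

section CubeBoundary

variable {n : ℕ} {a : Fin n → ℤ} {w : ℕ}

lemma cellOnBdry_of_onSubcubeBoundary {c : GCell n} (hc : CellIn a w c)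
    (hb : OnSubcubeBoundary a w univ c) : CellOnBdry a w c := by
  obtain ⟨j, -, hj, hex⟩ := hb
  refine ⟨hc, fun v hv => ⟨cellIn_iff.1 hc v hv, j, ?_⟩⟩
  obtain ⟨T, hT, rfl⟩ := hv
  simpa [show j ∉ T from fun h => hj (hT h)] using hex

lemma onSubcubeBoundary_of_cellOnBdry {c : GCell n} (h : CellOnBdry a w c) (hS : c.2 ≠ univ) :
    OnSubcubeBoundary a w univ c := by
  obtain ⟨x, S⟩ := c
  rcases le_or_gt w 1 with hw | hw
  · obtain ⟨j, hj⟩ : ∃ j, j ∉ S := by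
      by_contra! hS'
      exact hS (eq_univ_of_forall hS')
    have hjc := h.1 j
    simp only [hj, if_false, add_zero] at hjc
    exact ⟨j, mem_univ j, hj, show x j = a j ∨ x j = a j + w by omega⟩
  · -- the vertex stepping off every face `x_i = a_i` with `i ∈ S` can only be extreme in a
    -- direction along which the cell is flat
    obtain ⟨-, j, hj⟩ := h.2 _ ⟨{i ∈ S | x i = a i}, filter_subset _ _, rfl⟩
    have hjc := h.1 j
    by_cases hjS : j ∈ S
    · by_cases hja : x j = a j <;> simp [hjS, hja] at hj hjc <;> omega
    · exact ⟨j, mem_univ j, hjS, by simpa [hjS] using hj⟩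

end CubeBoundary

section CubeForms

variable {n : ℕ} {G : Type*} [AddCommGroup G] {a : Fin n → ℤ} {w k : ℕ}

lemma extZ_apply (f : FormB a w k G) {c : GCell n} (hc : CellIn a w c) (hk : #c.2 = k) :
    extZ a w k f c = f ⟨c, hc, hk⟩ := dif_pos ⟨hc, hk⟩

lemma extZ_of_card_ne (f : FormB a w k G) {c : GCell n} (hk : #c.2 ≠ k) :
    extZ a w k f c = 0 := dif_neg fun h => hk h.2

lemma dB_eq_dF_extZ (f : FormB a w k G) (c : {c : GCell n // CellIn a w c ∧ #c.2 = k + 1}) :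
    dB f c = dF (extZ a w k f) c.1 := by
  simp only [dB, dF]
  refine sum_congr rfl fun i _ => ?_
  have hk : #(c.1.2.erase i.1) = k := by simp [card_erase_of_mem i.2, c.2.2]
  rw [extZ_apply f (cellIn_shift_erase c.2.1 i.2) hk, extZ_apply f (cellIn_erase c.2.1 i.1) hk]

lemma dF_extZ_eq_zero {f : FormB a w k G} (hf : dB f = 0) {c : GCell n} (hc : CellIn a w c) :
    dF (extZ a w k f) c = 0 := by
  obtain ⟨x, S⟩ := c
  by_cases hk : #S = k + 1
  · rw [← dB_eq_dF_extZ f ⟨(x, S), hc, hk⟩, hf, Pi.zero_apply]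
  · rw [dF_apply]
    refine sum_eq_zero fun i hi => ?_
    have hk' : #(S.erase i) ≠ k := by
      have := card_pos.2 ⟨i, hi⟩
      rw [card_erase_of_mem hi]
      omega
    rw [extZ_of_card_ne f hk', extZ_of_card_ne f hk', sub_zero, smul_zero]

lemma dB_sub (f g : FormB a w k G) : dB (f - g) = dB f - dB g := by
  ext c
  simp only [dB, Pi.sub_apply, sub_sub_sub_comm, smul_sub, sum_sub_distrib]

lemma dB_restrict (ψ : GCell n → G) (c : {c : GCell n // CellIn a w c ∧ #c.2 = k + 1}) :
    dB (fun d : {c : GCell n // CellIn a w c ∧ #c.2 = k} => ψ d.1) c = dF ψ c.1 := rfl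

theorem exists_dB_eq_of_dB_eq_zero (f : FormB a w (k + 1) G) (hf : dB f = 0) :
    ∃ g : FormB a w k G, dB g = f := by
  obtain ⟨ψ, hψ⟩ := exists_dF_eq_on_subcube a w univ (extZ a w (k + 1) f)
    fun c hc => dF_extZ_eq_zero hf (inSubcube_univ.1 hc)
  refine ⟨fun c => ψ c.1, funext fun c => ?_⟩
  rw [dB_restrict, hψ c.1 (inSubcube_univ.2 c.2.1) (card_pos.1 (by rw [c.2.2]; omega)),
    extZ_apply f c.2.1 c.2.2]

theorem card_fiber_dB_eq {f : FormB a w (k + 1) G} {g₀ : FormB a w k G} (hg₀ : dB g₀ = f) :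
    Nat.card {g : FormB a w k G // dB g = f} = Nat.card {g : FormB a w k G // dB g = 0} :=
  Nat.card_congr <| (Equiv.subRight g₀).subtypeEquiv fun g => by
    rw [Equiv.subRight_apply, dB_sub, hg₀, sub_eq_zero]

theorem exists_dB_eq_of_dB_eq_zero_of_boundary (hk : k + 2 ≤ n) (f : FormB a w (k + 1) G)
    (hf : dB f = 0)
    (hf₀ : ∀ c : {c : GCell n // CellIn a w c ∧ #c.2 = k + 1}, CellOnBdry a w c.1 → f c = 0) :
    ∃ h : FormB a w k G,
      (∀ c : {c : GCell n // CellIn a w c ∧ #c.2 = k}, CellOnBdry a w c.1 → h c = 0) ∧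
        dB h = f := by
  have hφ₀ (c : GCell n) (hc : InSubcube a w univ c) (hb : OnSubcubeBoundary a w univ c) :
      extZ a w (k + 1) f c = 0 := by
    by_cases hck : #c.2 = k + 1
    · rw [extZ_apply f hc.1 hck]
      exact hf₀ _ (cellOnBdry_of_onSubcubeBoundary hc.1 hb)
    · exact extZ_of_card_ne f hck
  obtain ⟨ψ, hψ₀, hψ⟩ := exists_dF_eq_on_subcube_of_boundary a w univ (extZ a w (k + 1) f)
    (fun c hc => dF_extZ_eq_zero hf hc.1) hφ₀
  have hn : #(univ : Finset (Fin n)) = n := card_fin n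
  refine ⟨fun c => ψ c.1, fun c hc => ?_, funext fun c => ?_⟩
  · have hS : c.1.2 ≠ univ := ne_of_apply_ne card (by rw [c.2.2, hn]; omega)
    exact hψ₀ c.1 (inSubcube_univ.2 c.2.1) (onSubcubeBoundary_of_cellOnBdry hc hS)
      (by rw [c.2.2, hn]; omega)
  · rw [dB_restrict, hψ c.1 (inSubcube_univ.2 c.2.1) (by rw [c.2.2, hn]; omega),
      extZ_apply f c.2.1 c.2.2]

end CubeForms

theorem discrete_poincare_lemma_general (n : ℕ) (G : Type*) [AddCommGroup G]
    (k' : ℕ) (a : Fin n → ℤ) (w : ℕ) :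
    (∀ f : FormB a w (k' + 1) G, dB f = 0 → ∃ g : FormB a w k' G, dB g = f) ∧
    (Finite G → ∀ f : FormB a w (k' + 1) G, dB f = 0 →
      Nat.card {g : FormB a w k' G // dB g = f} =
        Nat.card {g : FormB a w k' G // dB g = 0}) ∧
    (k' + 1 ≤ n - 1 → ∀ f : FormB a w (k' + 1) G, dB f = 0 →
      (∀ c : {c : GCell n // CellIn a w c ∧ c.2.card = k' + 1},
        CellOnBdry a w c.1 → f c = 0) →
      ∃ h : FormB a w k' G,
        (∀ c : {c : GCell n // CellIn a w c ∧ c.2.card = k'},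
          CellOnBdry a w c.1 → h c = 0) ∧ dB h = f) := by
  refine ⟨exists_dB_eq_of_dB_eq_zero, fun _ f hf => ?_,
    fun hk => exists_dB_eq_of_dB_eq_zero_of_boundary (by omega)⟩
  obtain ⟨g₀, hg₀⟩ := exists_dB_eq_of_dB_eq_zero f hf
  exact card_fiber_dB_eq hg₀

/-- **Lemma 2.2 (Discrete Poincaré lemma).**
Take any `1 ≤ k ≤ n` (written `k = k' + 1`), an abelian group `G`, and a cube `B` in `ℤⁿ`.
Then:
(i) the exterior derivative `d` maps the `G`-valued `(k−1)`-forms on `B` surjectively onto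
the closed `G`-valued `k`-forms on `B`;
(ii) if `G` is finite, every closed `G`-valued `k`-form on `B` has exactly `m` preimages
under `d`, where `m` is the number of closed `G`-valued `(k−1)`-forms on `B`;
(iii) if moreover `k ≤ n − 1` and `f` is a closed `k`-form on `B` vanishing on the boundary
of `B`, then `f = dh` for some `(k−1)`-form `h` on `B` vanishing on the boundary of `B`. -/
theorem discrete_poincare_lemma (n : ℕ) (hn : 1 ≤ n) (G : Type*) [AddCommGroup G]
    (k' : ℕ) (hkn : k' + 1 ≤ n) (a : Fin n → ℤ) (w : ℕ) (hw : 0 < w) :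
    (∀ f : FormB a w (k' + 1) G, dB f = 0 → ∃ g : FormB a w k' G, dB g = f) ∧
    (Finite G → ∀ f : FormB a w (k' + 1) G, dB f = 0 →
      Nat.card {g : FormB a w k' G // dB g = f} =
        Nat.card {g : FormB a w k' G // dB g = 0}) ∧
    (k' + 1 ≤ n - 1 → ∀ f : FormB a w (k' + 1) G, dB f = 0 →
      (∀ c : {c : GCell n // CellIn a w c ∧ c.2.card = k' + 1},
        CellOnBdry a w c.1 → f c = 0) →
      ∃ h : FormB a w k' G,
        (∀ c : {c : GCell n // CellIn a w c ∧ c.2.card = k'},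
          CellOnBdry a w c.1 → h c = 0) ∧ dB h = f) :=
  discrete_poincare_lemma_general n G k' a w
end
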